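/- arXiv:1207.0944 — 10 statements merged into one kernel-verified Lean document; each statement's English description precedes it below -/
import Mathlib

section
/- If a function f on an open subset Ω of ℝ^n is convex on L ∩ Ω for every straight line L (i.e., for all x₁, x₂ ∈ Ω and λ ∈ [0,1] with λx₁+(1-λ)x₂ ∈ Ω one has f(λx₁+(1-λ)x₂) ≤ λf(x₁)+(1-λ)f(x₂)), then f is convex on Ω: for any convex combination x = λ₁x₁+⋯+λₖxₖ with all xᵢ ∈ Ω and x ∈ Ω, one has f(x) ≤ λ₁f(x₁)+⋯+λₖf(xₖ). -/
open scoped BigOperators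

/-- Jensen-type convexity of `f` on an arbitrary subset `s`: the Jensen inequality
holds for every convex combination of points of `s` whose result lies in `s`. -/
def JConvexOn {E : Type*} [AddCommGroup E] [Module ℝ E] (s : Set E) (f : E → ℝ) : Prop :=
  ∀ (k : ℕ) (x : Fin k → E) (w : Fin k → ℝ),
    (∀ i, x i ∈ s) → (∀ i, 0 ≤ w i) → (∑ i, w i) = 1 →
    (∑ i, w i • x i) ∈ s →
    f (∑ i, w i • x i) ≤ ∑ i, w i * f (x i)

/-!
Let `c = ∑ wᵢ xᵢ ∈ Ω`. Pulling every `xᵢ` towards `c` to `yᵢ = t xᵢ + (1 - t) c` with `t > 0`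
small puts all `yᵢ` in a ball around `c` inside `Ω`, keeps the barycenter `∑ wᵢ yᵢ = c`, and
on the ball `f` is convex, so the finite Jensen inequality gives `f c ≤ ∑ wᵢ f(yᵢ)`. Convexity on
the segments `[c, xᵢ]` gives `f(yᵢ) ≤ t f(xᵢ) + (1 - t) f(c)`; combining and dividing by `t`
yields `f c ≤ ∑ wᵢ f(xᵢ)`.
-/

open Finset Filter Topology

section Module

variable {E : Type*} [AddCommGroup E] [Module ℝ E]

def LineConvexOn (s : Set E) (f : E → ℝ) : Prop :=
  ∀ x₁ ∈ s, ∀ x₂ ∈ s, ∀ l : ℝ, 0 ≤ l → l ≤ 1 →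
    l • x₁ + (1 - l) • x₂ ∈ s → f (l • x₁ + (1 - l) • x₂) ≤ l * f x₁ + (1 - l) * f x₂

theorem LineConvexOn.convexOn_of_subset {Ω s : Set E} {f : E → ℝ} (hf : LineConvexOn Ω f)
    (hs : Convex ℝ s) (hsΩ : s ⊆ Ω) : ConvexOn ℝ s f := by
  refine ⟨hs, fun a ha b hb μ ν hμ hν hμν => ?_⟩
  obtain rfl : ν = 1 - μ := by linarith
  exact hf a (hsΩ ha) b (hsΩ hb) μ hμ (by linarith) (hsΩ (hs ha hb hμ hν hμν))

theorem Finset.sum_smul_smul_add_smul {ι : Type*} (s : Finset ι) {w : ι → ℝ}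
    (hw : ∑ i ∈ s, w i = 1) (x : ι → E) (c : E) (t : ℝ) :
    ∑ i ∈ s, w i • (t • x i + (1 - t) • c) = t • ∑ i ∈ s, w i • x i + (1 - t) • c := by
  simp only [smul_add, sum_add_distrib, smul_comm (w _) t, ← smul_sum, smul_smul (w _) (1 - t),
    ← sum_smul, ← sum_mul, hw, one_mul]

end Module

theorem eventually_forall_smul_add_smul_mem {E ι : Type*} [AddCommGroup E] [Module ℝ E]
    [TopologicalSpace E] [ContinuousAdd E] [ContinuousSMul ℝ E] [Finite ι]
    (x : ι → E) {c : E} {U : Set E} (hU : U ∈ 𝓝 c) :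
    ∀ᶠ t in 𝓝 (0 : ℝ), ∀ i, t • x i + (1 - t) • c ∈ U :=
  eventually_all.2 fun i =>
    (by fun_prop : Continuous fun t : ℝ => t • x i + (1 - t) • c).tendsto' 0 c (by simp) hU

theorem LineConvexOn.jConvexOn {E : Type*} [NormedAddCommGroup E] [NormedSpace ℝ E]
    {Ω : Set E} {f : E → ℝ} (hΩ : IsOpen Ω) (hf : LineConvexOn Ω f) : JConvexOn Ω f := by
  intro k x w hx hw hw1 hc
  set c := ∑ i, w i • x i
  obtain ⟨ε, hε, hball⟩ := Metric.isOpen_iff.mp hΩ c hc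
  obtain ⟨t, hy, ht⟩ :=
    ((eventually_forall_smul_add_smul_mem x (Metric.ball_mem_nhds c hε)).filter_mono
      nhdsWithin_le_nhds |>.and (Ioo_mem_nhdsGT one_pos)).exists
  have hJensen := (hf.convexOn_of_subset (convex_ball c ε) hball).map_sum_le (t := univ)
    (fun i _ => hw i) hw1 (fun i _ => hy i)
  rw [sum_smul_smul_add_smul _ hw1, ← add_smul, add_sub_cancel, one_smul] at hJensen
  have hsegment : ∀ i, f (t • x i + (1 - t) • c) ≤ t * f (x i) + (1 - t) * f c := fun i =>
    hf _ (hx i) _ hc t ht.1.le ht.2.le (hball (hy i))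
  have hmix : f c ≤ t * ∑ i, w i * f (x i) + (1 - t) * f c := by
    simpa only [smul_eq_mul] using
      (hJensen.trans (sum_le_sum fun i _ => mul_le_mul_of_nonneg_left (hsegment i) (hw i))).trans_eq
        (sum_smul_smul_add_smul univ hw1 (fun i => f (x i)) (f c) t)
  nlinarith [ht.1]

/-- If a function on an open subset `Ω ⊆ ℝⁿ` is convex on `L ∩ Ω` for every straight
line `L`, then it is convex on `Ω`. -/
theorem convex_of_line_convex_of_isOpen {n : ℕ}
    (Ω : Set (EuclideanSpace ℝ (Fin n))) (hΩ : IsOpen Ω)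
    (f : EuclideanSpace ℝ (Fin n) → ℝ)
    (hline : ∀ x₁ ∈ Ω, ∀ x₂ ∈ Ω, ∀ l : ℝ, 0 ≤ l → l ≤ 1 →
      l • x₁ + (1 - l) • x₂ ∈ Ω →
      f (l • x₁ + (1 - l) • x₂) ≤ l * f x₁ + (1 - l) * f x₂) :
    JConvexOn Ω f :=
  LineConvexOn.jConvexOn hΩ hline
end

section
/- A function on an open subset Ω of ℝ^n is strictly convex if and only if it is convex and strictly locally convex (i.e., every point of Ω has a ball neighborhood on which the restriction of f is strictly convex). -/
open scoped BigOperators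

/-- Strict Jensen-type convexity of `f` on an arbitrary subset `s`. -/
def StrictJConvexOn {E : Type*} [AddCommGroup E] [Module ℝ E] (s : Set E) (f : E → ℝ) : Prop :=
  ∀ (k : ℕ) (x : Fin k → E) (w : Fin k → ℝ),
    (∀ i, x i ∈ s) → (∀ i, 0 < w i) → (∀ i, w i < 1) → (∑ i, w i) = 1 →
    (∑ i, w i • x i) ∈ s →
    (∀ i, x i ≠ ∑ i, w i • x i) →
    f (∑ i, w i • x i) < ∑ i, w i * f (x i)

/-! Shrinking all points of a Jensen configuration towards their barycentre `b` by a small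
factor `t ∈ (0, 1)` keeps the barycentre and, `Ω` being open, moves them into a neighbourhood of
`b` on which `f` is strictly convex. Strict convexity there and convexity along each segment
`[b, xᵢ]` give `f b < (1 - t) f b + t ∑ wᵢ f xᵢ`. Conversely, strict Jensen implies Jensen once
the points of weight zero or equal to the barycentre are discarded. -/

open Filter Topology Finset AffineMap

theorem Finset.centerMass_eq_sum_div_smul {R M ι : Type*} [Field R] [AddCommGroup M]
    [Module R M] (t : Finset ι) (w : ι → R) (z : ι → M) :
    t.centerMass w z = ∑ i ∈ t, (w i / ∑ j ∈ t, w j) • z i := by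
  simp only [centerMass, smul_sum, smul_smul, div_eq_inv_mul]

section

variable {E : Type*} [AddCommGroup E] [Module ℝ E] {s : Set E} {f : E → ℝ}

theorem StrictJConvexOn.mono {t : Set E} (h : StrictJConvexOn s f) (hts : t ⊆ s) :
    StrictJConvexOn t f :=
  fun k x w hx hw hw1 hsum hb hne => h k x w (fun i => hts (hx i)) hw hw1 hsum (hts hb) hne

theorem lt_one_of_ne_sum_smul {ι : Type*} {t : Finset ι} {w : ι → ℝ} {p : ι → E}
    (h₀ : ∀ i ∈ t, 0 ≤ w i) (h₁ : ∑ i ∈ t, w i = 1) (hne : ∀ i ∈ t, p i ≠ ∑ i ∈ t, w i • p i)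
    {j : ι} (hj : j ∈ t) : w j < 1 := by
  classical
  refine ((single_le_sum h₀ hj).trans_eq h₁).lt_of_ne fun hwj => hne j hj ?_
  have hrest : ∀ i ∈ t.erase j, w i = 0 := by
    refine (sum_eq_zero_iff_of_nonneg fun i hi => h₀ i (mem_of_mem_erase hi)).1 ?_
    linarith [add_sum_erase t w hj]
  rw [← add_sum_erase t _ hj, sum_eq_zero fun i hi => by rw [hrest i hi, zero_smul], hwj,
    one_smul, add_zero]

theorem StrictJConvexOn.map_sum_lt {ι : Type*} (h : StrictJConvexOn s f) {t : Finset ι}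
    {w : ι → ℝ} {p : ι → E} (h₀ : ∀ i ∈ t, 0 < w i) (h₁ : ∑ i ∈ t, w i = 1)
    (hmem : ∀ i ∈ t, p i ∈ s) (hc : ∑ i ∈ t, w i • p i ∈ s)
    (hne : ∀ i ∈ t, p i ≠ ∑ i ∈ t, w i • p i) :
    f (∑ i ∈ t, w i • p i) < ∑ i ∈ t, w i * f (p i) := by
  let e : Fin #t ≃ t := t.equivFin.symm
  have reindexE (g : ι → E) : ∑ j, g (e j) = ∑ i ∈ t, g i := by
    rw [e.sum_comp (fun i => g i), sum_coe_sort]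
  have reindexR (g : ι → ℝ) : ∑ j, g (e j) = ∑ i ∈ t, g i := by
    rw [e.sum_comp (fun i => g i), sum_coe_sort]
  have := h #t (fun j => p (e j)) (fun j => w (e j)) (fun j => hmem _ (e j).2)
    (fun j => h₀ _ (e j).2)
    (fun j => lt_one_of_ne_sum_smul (fun i hi => (h₀ i hi).le) h₁ hne (e j).2)
    (by rw [reindexR w, h₁]) (by rwa [reindexE fun i => w i • p i])
    (by rw [reindexE fun i => w i • p i]; exact fun j => hne _ (e j).2)
  rwa [reindexE fun i => w i • p i, reindexR fun i => w i * f (p i)] at this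

theorem StrictJConvexOn.map_centerMass_lt {ι : Type*} (h : StrictJConvexOn s f)
    {t : Finset ι} {w : ι → ℝ} {p : ι → E} (ht : t.Nonempty) (h₀ : ∀ i ∈ t, 0 < w i)
    (hmem : ∀ i ∈ t, p i ∈ s) (hc : t.centerMass w p ∈ s)
    (hne : ∀ i ∈ t, p i ≠ t.centerMass w p) :
    f (t.centerMass w p) < t.centerMass w (f ∘ p) := by
  have hT : 0 < ∑ i ∈ t, w i := sum_pos h₀ ht
  rw [centerMass_eq_sum_div_smul] at hc hne ⊢
  simpa only [centerMass_eq_sum_div_smul, Function.comp_apply, smul_eq_mul] using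
    h.map_sum_lt (fun i hi => div_pos (h₀ i hi) hT) (by rw [← sum_div, div_self hT.ne'])
      hmem hc hne

theorem StrictJConvexOn.jConvexOn (h : StrictJConvexOn s f) : JConvexOn s f := by
  classical
  intro k x w hx hw hsum hb
  set b := ∑ i, w i • x i
  set J := univ.filter fun i => w i ≠ 0 ∧ x i ≠ b
  have hout : ∀ i ∉ J, w i = 0 ∨ x i = b := fun i hi => by
    simp only [J, mem_filter, mem_univ, true_and] at hi
    tauto
  have hJ_smul : ∑ i ∈ J, w i • (x i - b) = 0 := by
    rw [sum_subset (subset_univ J) fun i _ hi => by rcases hout i hi with h | h <;> simp [h]]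
    simp only [smul_sub, sum_sub_distrib, ← sum_smul, hsum, one_smul, b, sub_self]
  have hJ_mul : ∑ i ∈ J, w i * (f (x i) - f b) = ∑ i, w i * f (x i) - f b := by
    rw [sum_subset (subset_univ J) fun i _ hi => by rcases hout i hi with h | h <;> simp [h]]
    simp only [mul_sub, sum_sub_distrib, ← sum_mul, hsum, one_mul]
  suffices 0 ≤ ∑ i ∈ J, w i * (f (x i) - f b) by linarith
  rcases J.eq_empty_or_nonempty with hJ | hJ
  · simp [hJ]
  have hpos : ∀ i ∈ J, 0 < w i := fun i hi =>
    (hw i).lt_of_ne (mem_filter.1 hi).2.1.symm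
  have hT : 0 < ∑ i ∈ J, w i := sum_pos hpos hJ
  have hc : J.centerMass w x = b := by
    simp only [smul_sub, sum_sub_distrib, ← sum_smul, sub_eq_zero] at hJ_smul
    rw [centerMass, hJ_smul, smul_smul, inv_mul_cancel₀ hT.ne', one_smul]
  have hlt := h.map_centerMass_lt hJ hpos (fun i _ => hx i) (hc ▸ hb)
    (fun i hi => hc ▸ (mem_filter.1 hi).2.2)
  rw [hc, centerMass, smul_eq_mul, inv_mul_eq_div, lt_div_iff₀ hT] at hlt
  simp only [Function.comp_apply, smul_eq_mul] at hlt
  simp only [mul_sub, sum_sub_distrib, ← sum_mul]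
  linarith

theorem JConvexOn.map_lineMap_le (h : JConvexOn s f) {a c : E} {t : ℝ} (ha : a ∈ s) (hc : c ∈ s)
    (ht₀ : 0 ≤ t) (ht₁ : t ≤ 1) (hmem : lineMap a c t ∈ s) :
    f (lineMap a c t) ≤ (1 - t) * f a + t * f c := by
  have := h 2 ![a, c] ![1 - t, t] (by simp [Fin.forall_fin_two, ha, hc])
    (by simp [Fin.forall_fin_two, ht₀, ht₁]) (by simp [Fin.sum_univ_two])
    (by simpa [Fin.sum_univ_two, lineMap_apply_module] using hmem)
  simpa [Fin.sum_univ_two, lineMap_apply_module] using this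

theorem sum_smul_lineMap {ι : Type*} {t : Finset ι} {w : ι → ℝ} (hw : ∑ i ∈ t, w i = 1)
    (a : E) (x : ι → E) (c : ℝ) :
    ∑ i ∈ t, w i • lineMap a (x i) c = lineMap a (∑ i ∈ t, w i • x i) c := by
  simp only [lineMap_apply_module, smul_add, sum_add_distrib, smul_comm (w _), ← smul_sum,
    ← sum_smul, hw, one_smul]

end

theorem JConvexOn.strictJConvexOn_of_locally {E : Type*} [AddCommGroup E] [Module ℝ E]
    [TopologicalSpace E] [IsTopologicalAddGroup E] [ContinuousSMul ℝ E] {s : Set E}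
    {f : E → ℝ} (hs : IsOpen s) (hf : JConvexOn s f)
    (hloc : ∀ x ∈ s, ∃ U ∈ 𝓝 x, StrictJConvexOn U f) : StrictJConvexOn s f := by
  intro k x w hx hw hw1 hsum hb hne
  set b := ∑ i, w i • x i
  obtain ⟨U, hU, hstrict⟩ := hloc b hb
  have hnear : ∀ᶠ t in 𝓝[>] (0 : ℝ), ∀ i, lineMap b (x i) t ∈ U ∩ s := by
    refine eventually_all.2 fun i => ?_
    have hcont : Tendsto (lineMap b (x i) : ℝ → E) (𝓝 0) (𝓝 b) := by
      simpa using (lineMap_continuous (R := ℝ) (p := b) (q := x i)).tendsto 0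
    exact nhdsWithin_le_nhds (hcont (inter_mem hU (hs.mem_nhds hb)))
  obtain ⟨t, hy, ht₀, ht₁⟩ := (hnear.and (Ioo_mem_nhdsGT one_pos)).exists
  have hyb : ∑ i, w i • lineMap b (x i) t = b := by
    rw [sum_smul_lineMap hsum, lineMap_same_apply]
  have hlt : f b < ∑ i, w i * f (lineMap b (x i) t) := by
    have hy_ne (i : Fin k) : lineMap b (x i) t ≠ b := by
      simpa [lineMap_eq_left_iff, ht₀.ne'] using (hne i).symm
    have := hstrict k _ w (fun i => (hy i).1) hw hw1 hsum (by rw [hyb]; exact mem_of_mem_nhds hU)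
      (by rwa [hyb])
    rwa [hyb] at this
  have hle : ∑ i, w i * f (lineMap b (x i) t) ≤ (1 - t) * f b + t * ∑ i, w i * f (x i) := calc
    _ ≤ ∑ i, w i * ((1 - t) * f b + t * f (x i)) := sum_le_sum fun i _ =>
        mul_le_mul_of_nonneg_left (hf.map_lineMap_le hb (hx i) ht₀.le ht₁.le (hy i).2) (hw i).le
    _ = (1 - t) * f b + t * ∑ i, w i * f (x i) := by
        simp only [mul_add, sum_add_distrib, mul_left_comm (w _), ← mul_sum, ← sum_mul, hsum]
        ring
  nlinarith

/-- A function on an open subset `Ω ⊆ ℝⁿ` is strictly convex if and only if it is convex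
and strictly locally convex. -/
theorem strictConvex_iff_convex_and_strictLocallyConvex {n : ℕ}
    (Ω : Set (EuclideanSpace ℝ (Fin n))) (hΩ : IsOpen Ω)
    (f : EuclideanSpace ℝ (Fin n) → ℝ) :
    StrictJConvexOn Ω f ↔
      JConvexOn Ω f ∧
        ∀ x ∈ Ω, ∃ ε > (0 : ℝ), StrictJConvexOn (Metric.ball x ε ∩ Ω) f := by
  constructor
  · intro h
    exact ⟨h.jConvexOn, fun x _ => ⟨1, one_pos, h.mono Set.inter_subset_right⟩⟩
  · rintro ⟨hconv, hloc⟩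
    refine hconv.strictJConvexOn_of_locally hΩ fun x hx => ?_
    obtain ⟨ε, hε, hstrict⟩ := hloc x hx
    exact ⟨_, inter_mem (Metric.ball_mem_nhds x hε) (hΩ.mem_nhds hx), hstrict⟩
end

section
/- If a function f on a subset Ω ⊆ ℝ^n is locally convex (each point has a ball neighborhood B such that f restricted to B ∩ Ω is convex), then f is interval convex: the restriction of f to any line segment contained in Ω is convex. -/
/-! Restricted to a segment, `f` becomes a function on `[0, 1]` that is convex near every point,
and convexity on an interval is a local property: two intervals of convexity that overlap in more
than a point glue, since the slope inequalities can be chained through two points of the overlap.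
-/

open scoped BigOperators

open Set Topology

namespace JConvexOn

variable {E F : Type*} [AddCommGroup E] [Module ℝ E] [AddCommGroup F] [Module ℝ F]
  {s : Set E} {f : E → ℝ}

lemma apply_smul_add_smul_le (hf : JConvexOn s f) {x y : E} {a b : ℝ} (hx : x ∈ s) (hy : y ∈ s)
    (ha : 0 ≤ a) (hb : 0 ≤ b) (hab : a + b = 1) (hxy : a • x + b • y ∈ s) :
    f (a • x + b • y) ≤ a * f x + b * f y := by
  simpa [Fin.sum_univ_two] using hf 2 ![x, y] ![a, b] (by simp [Fin.forall_fin_two, hx, hy])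
    (by simp [Fin.forall_fin_two, ha, hb]) (by simpa [Fin.sum_univ_two] using hab)
    (by simpa [Fin.sum_univ_two] using hxy)

lemma convexOn_comp_affineMap (hf : JConvexOn s f) (φ : F →ᵃ[ℝ] E) {t : Set F}
    (ht : Convex ℝ t) (hφ : MapsTo φ t s) : ConvexOn ℝ t (f ∘ φ) := by
  refine ⟨ht, fun u hu v hv a b ha hb hab => ?_⟩
  have hcombo : φ (a • u + b • v) = a • φ u + b • φ v := Convex.combo_affine_apply hab
  simp only [Function.comp_apply, smul_eq_mul, hcombo]
  exact hf.apply_smul_add_smul_le (hφ hu) (hφ hv) ha hb hab (hcombo ▸ hφ (ht hu hv ha hb hab))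

end JConvexOn

section Slopes

variable {g : ℝ → ℝ} {p q r : ℝ}

lemma slope_le_of_slope_le_of_slope_le {B : ℝ} (hpq : p < q) (hqr : q < r)
    (h₁ : (g q - g p) / (q - p) ≤ B) (h₂ : (g r - g q) / (r - q) ≤ B) :
    (g r - g p) / (r - p) ≤ B := by
  rw [div_le_iff₀ (by linarith)] at h₁ h₂ ⊢
  linarith

lemma le_slope_of_le_slope_of_le_slope {A : ℝ} (hpq : p < q) (hqr : q < r)
    (h₁ : A ≤ (g q - g p) / (q - p)) (h₂ : A ≤ (g r - g q) / (r - q)) :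
    A ≤ (g r - g p) / (r - p) := by
  rw [le_div_iff₀ (by linarith)] at h₁ h₂ ⊢
  linarith

end Slopes

lemma ConvexOn.Icc_glue {g : ℝ → ℝ} {a b c d : ℝ} (hab : ConvexOn ℝ (Icc a b) g)
    (hcd : ConvexOn ℝ (Icc c d) g) (hcb : c < b) :
    ConvexOn ℝ (Icc a d) g := by
  refine convexOn_of_slope_mono_adjacent (convex_Icc a d)
    fun {x y z} ⟨hxa, _⟩ ⟨_, hzd⟩ hxy hyz => ?_
  by_cases hzb : z ≤ b
  · exact hab.slope_mono_adjacent ⟨hxa, by linarith⟩ ⟨by linarith, hzb⟩ hxy hyz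
  by_cases hcx : c ≤ x
  · exact hcd.slope_mono_adjacent ⟨hcx, by linarith⟩ ⟨by linarith, hzd⟩ hxy hyz
  push Not at hzb hcx
  -- Now `x < c < b < z`: chain the slope inequalities through two points `u < v` of `(c, b)`.
  by_cases hyb : y < b
  · obtain ⟨u, hu, hub⟩ := exists_between (max_lt hyb hcb)
    obtain ⟨v, huv, hvb⟩ := exists_between hub
    rw [max_lt_iff] at hu
    have hxy_yu := hab.slope_mono_adjacent ⟨hxa, by linarith⟩ ⟨by linarith, hub.le⟩ hxy hu.1
    have hyu_uv := hab.slope_mono_adjacent ⟨by linarith, hyb.le⟩ ⟨by linarith, hvb.le⟩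
      hu.1 huv
    have huv_uz := hcd.secant_mono_aux2 ⟨hu.2.le, by linarith⟩ ⟨by linarith, hzd⟩ huv
      (by linarith)
    exact le_slope_of_le_slope_of_le_slope hu.1 (by linarith) hxy_yu (by linarith)
  · push Not at hyb
    obtain ⟨u, hcu, hub⟩ := exists_between hcb
    obtain ⟨v, huv, hvb⟩ := exists_between hub
    have hxv_uv := hab.secant_mono_aux3 ⟨hxa, by linarith⟩ ⟨by linarith, hvb.le⟩
      (by linarith) huv
    have huv_vy := hcd.slope_mono_adjacent (z := y) ⟨hcu.le, by linarith⟩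
      ⟨by linarith, by linarith⟩ huv (by linarith)
    have hvy_yz := hcd.slope_mono_adjacent (x := v) ⟨by linarith, by linarith⟩
      ⟨by linarith, hzd⟩ (by linarith) hyz
    exact slope_le_of_slope_le_of_slope_le (by linarith) (by linarith) (by linarith) hvy_yz

/-- The supremum `T` of the `t` with `g` convex on `[a, t]` is `b`: otherwise a convexity
neighbourhood of `T` glues onto some such `[a, t]` and reaches beyond `T`. -/
lemma convexOn_Icc_of_locally_convexOn {g : ℝ → ℝ} {a b : ℝ} (hab : a ≤ b)
    (hloc : ∀ t ∈ Icc a b, ∃ U ∈ 𝓝[Icc a b] t, ConvexOn ℝ U g) :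
    ConvexOn ℝ (Icc a b) g := by
  set S := {t ∈ Icc a b | ConvexOn ℝ (Icc a t) g}
  have haS : a ∈ S := by
    obtain ⟨U, hU, hgU⟩ := hloc a (left_mem_Icc.2 hab)
    refine ⟨left_mem_Icc.2 hab, hgU.subset ?_ (convex_Icc a a)⟩
    rw [Icc_self, singleton_subset_iff]
    exact mem_of_mem_nhdsWithin (left_mem_Icc.2 hab) hU
  have hSbdd : BddAbove S := ⟨b, fun t ht => ht.1.2⟩
  set T := sSup S
  have hT : T ∈ Icc a b := ⟨le_csSup hSbdd haS, csSup_le ⟨a, haS⟩ fun t ht => ht.1.2⟩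
  obtain ⟨U, hU, hgU⟩ := hloc T hT
  obtain ⟨ε, hε, hεU⟩ := Metric.mem_nhdsWithin_iff.1 hU
  set c := max a (T - ε / 2)
  set d := min b (T + ε / 2)
  have hTd : T ≤ d := le_min hT.2 (by linarith)
  have hcd : ConvexOn ℝ (Icc c d) g := by
    refine hgU.subset (fun x hx => hεU ⟨?_, ?_⟩) (convex_Icc c d)
    · rw [Real.ball_eq_Ioo]
      constructor <;> linarith [le_max_right a (T - ε / 2), min_le_right b (T + ε / 2), hx.1, hx.2]
    · exact ⟨le_trans (le_max_left _ _) hx.1, le_trans hx.2 (min_le_left _ _)⟩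
  have hdS : d ∈ S := by
    refine ⟨⟨hT.1.trans hTd, min_le_left _ _⟩, ?_⟩
    rcases (le_max_left a (T - ε / 2)).eq_or_lt with hac | hac
    · rwa [hac]
    · have haT : a < T - ε / 2 := (lt_max_iff.1 hac).resolve_left (lt_irrefl a)
      have hcT : c < T := max_lt (by linarith) (by linarith)
      obtain ⟨s, hsS, hcs⟩ := exists_lt_of_lt_csSup ⟨a, haS⟩ hcT
      exact hsS.2.Icc_glue hcd hcs
  have hdb : d = b := by
    by_contra hdb
    have hdT : d = T + ε / 2 := (min_choice b _).resolve_left hdb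
    linarith [le_csSup hSbdd hdS]
  exact hdb ▸ hdS.2

/-- If a function on a subset `Ω ⊆ ℝⁿ` is locally convex, then it is interval convex:
its restriction to any line segment contained in `Ω` is convex. -/
theorem intervalConvex_of_locallyConvex {n : ℕ}
    (Ω : Set (EuclideanSpace ℝ (Fin n))) (f : EuclideanSpace ℝ (Fin n) → ℝ)
    (hf : ∀ x ∈ Ω, ∃ ε > (0 : ℝ), JConvexOn (Metric.ball x ε ∩ Ω) f) :
    ∀ x₁ ∈ Ω, ∀ x₂ ∈ Ω, segment ℝ x₁ x₂ ⊆ Ω → ∀ l : ℝ, 0 ≤ l → l ≤ 1 →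
      f (l • x₁ + (1 - l) • x₂) ≤ l * f x₁ + (1 - l) * f x₂ := by
  intro x₁ _ x₂ _ hseg l hl₀ hl₁
  set φ := AffineMap.lineMap (k := ℝ) x₂ x₁
  have hφ : MapsTo φ (Icc 0 1) Ω := by
    rw [segment_symm, segment_eq_image_lineMap] at hseg
    exact fun t ht => hseg (mem_image_of_mem φ ht)
  have hconv : ConvexOn ℝ (Icc 0 1) (f ∘ φ) := by
    refine convexOn_Icc_of_locally_convexOn zero_le_one fun t ht => ?_
    obtain ⟨ε, hε, hfε⟩ := hf (φ t) (hφ ht)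
    refine ⟨Icc 0 1 ∩ φ ⁻¹' Metric.ball (φ t) ε, inter_mem_nhdsWithin _
      (AffineMap.lineMap_continuous.continuousAt.preimage_mem_nhds (Metric.ball_mem_nhds _ hε)),
      hfε.convexOn_comp_affineMap φ ((convex_Icc 0 1).inter ((convex_ball _ _).affine_preimage φ))
        fun u hu => ⟨hu.2, hφ hu.1⟩⟩
  simpa [φ, AffineMap.lineMap_apply_module, add_comm] using
    hconv.2 (right_mem_Icc.2 zero_le_one) (left_mem_Icc.2 zero_le_one) hl₀ (sub_nonneg.2 hl₁)
      (add_sub_cancel l 1)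
end

section
/- Let f be a convex function on a subset Ω ⊆ ℝ^n that is bounded below. Then f extends to a real-valued convex function on the convex hull of Ω; indeed, the convex roof f̂(x) = inf{λ₁f(x₁)+⋯+λₖf(xₖ) : x = λ₁x₁+⋯+λₖxₖ, xᵢ ∈ Ω, λᵢ ≥ 0, Σλᵢ = 1} is finite on the convex hull, convex, and agrees with f on Ω. -/
open scoped BigOperators

/-- The set of values `∑ λᵢ f(xᵢ)` over all representations of `x` as a convex
combination `x = ∑ λᵢ xᵢ` of points `xᵢ ∈ Ω`. -/
def roofSet {E : Type*} [AddCommGroup E] [Module ℝ E] (Ω : Set E) (f : E → ℝ) (x : E) :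
    Set ℝ :=
  { r | ∃ (k : ℕ) (p : Fin k → E) (w : Fin k → ℝ),
      (∀ i, p i ∈ Ω) ∧ (∀ i, 0 ≤ w i) ∧ (∑ i, w i) = 1 ∧
      (∑ i, w i • p i) = x ∧ r = ∑ i, w i * f (p i) }

/-- The convex roof of `f`. -/
noncomputable def convexRoof {E : Type*} [AddCommGroup E] [Module ℝ E]
    (Ω : Set E) (f : E → ℝ) (x : E) : ℝ :=
  sInf (roofSet Ω f x)

/-
The roof values at `x` come from finite convex decompositions of `x` over `Ω`. Concatenating a
decomposition of `x` scaled by `a` with one of `y` scaled by `b` decomposes `a • x + b • y`, so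
the infimum is convex; a lower bound `m` for `f` bounds every roof value, so the infimum is
finite on the convex hull; and Jensen's inequality on `Ω` says that at a point of `Ω` the
trivial decomposition is optimal, so the roof agrees with `f` there.
-/

section ConvexRoof

open scoped Pointwise

variable {E : Type*} [AddCommGroup E] [Module ℝ E] {Ω : Set E} {f : E → ℝ} {x y : E}

lemma roofSet_nonempty (hx : x ∈ convexHull ℝ Ω) : (roofSet Ω f x).Nonempty := by
  obtain ⟨ι, _, w, z, hw0, hw1, hz, hx⟩ := mem_convexHull_iff_exists_fintype.mp hx
  let e := (Fintype.equivFin ι).symm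
  exact ⟨_, Fintype.card ι, z ∘ e, w ∘ e, fun _ => hz _, fun _ => hw0 _,
    (e.sum_comp w).trans hw1, (e.sum_comp fun j => w j • z j).trans hx,
    (e.sum_comp fun j => w j * f (z j)).symm⟩

lemma mem_lowerBounds_roofSet {m : ℝ} (hm : ∀ y ∈ Ω, m ≤ f y) (x : E) :
    m ∈ lowerBounds (roofSet Ω f x) := by
  rintro r ⟨k, p, w, hp, hw0, hw1, -, rfl⟩
  calc m = ∑ i, w i * m := by rw [← Finset.sum_mul, hw1, one_mul]
    _ ≤ ∑ i, w i * f (p i) :=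
      Finset.sum_le_sum fun i _ => mul_le_mul_of_nonneg_left (hm _ (hp i)) (hw0 i)

lemma smul_add_smul_subset_roofSet {a b : ℝ} (ha : 0 ≤ a) (hb : 0 ≤ b) (hab : a + b = 1) :
    a • roofSet Ω f x + b • roofSet Ω f y ⊆ roofSet Ω f (a • x + b • y) := by
  rintro _ ⟨_, ⟨_, ⟨k, p, w, hp, hw0, hw1, rfl, rfl⟩, rfl⟩,
    _, ⟨_, ⟨l, q, v, hq, hv0, hv1, rfl, rfl⟩, rfl⟩, rfl⟩
  refine ⟨k + l, Fin.append p q, Fin.append (fun i => a * w i) (fun i => b * v i),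
    Fin.addCases (by simpa using hp) (by simpa using hq),
    Fin.addCases (by simpa using fun i => mul_nonneg ha (hw0 i))
      (by simpa using fun i => mul_nonneg hb (hv0 i)), ?_, ?_, ?_⟩ <;>
    simp only [Fin.sum_univ_add, Fin.append_left, Fin.append_right, smul_eq_mul, mul_smul,
      mul_assoc, ← Finset.mul_sum, ← Finset.smul_sum, hw1, hv1, mul_one, hab]

lemma convexOn_convexRoof (hbdd : ∀ x ∈ convexHull ℝ Ω, BddBelow (roofSet Ω f x)) :
    ConvexOn ℝ (convexHull ℝ Ω) (convexRoof Ω f) := by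
  refine ⟨convex_convexHull ℝ Ω, fun x hx y hy a b ha hb hab => ?_⟩
  have hx₀ : (a • roofSet Ω f x).Nonempty := (roofSet_nonempty hx).smul_set
  have hy₀ : (b • roofSet Ω f y).Nonempty := (roofSet_nonempty hy).smul_set
  calc convexRoof Ω f (a • x + b • y)
      ≤ sInf (a • roofSet Ω f x + b • roofSet Ω f y) :=
        csInf_le_csInf (hbdd _ (convex_convexHull ℝ Ω hx hy ha hb hab)) (hx₀.add hy₀)
          (smul_add_smul_subset_roofSet ha hb hab)
    _ = a • convexRoof Ω f x + b • convexRoof Ω f y := by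
        rw [csInf_add hx₀ ((hbdd x hx).smul_of_nonneg ha) hy₀ ((hbdd y hy).smul_of_nonneg hb),
          Real.sInf_smul_of_nonneg ha, Real.sInf_smul_of_nonneg hb, convexRoof, convexRoof]

lemma isLeast_roofSet (hf : JConvexOn Ω f) (hx : x ∈ Ω) : IsLeast (roofSet Ω f x) (f x) := by
  refine ⟨⟨1, fun _ => x, fun _ => 1, fun _ => hx, fun _ => zero_le_one, by simp, by simp,
    by simp⟩, ?_⟩
  rintro r ⟨k, p, w, hp, hw0, hw1, rfl, rfl⟩
  exact hf k p w hp hw0 hw1 hx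

end ConvexRoof

/-- A bounded-below convex function on `Ω ⊆ ℝⁿ` extends, via the convex roof, to a
real-valued convex function on the convex hull of `Ω`. -/
theorem convexRoof_extension {n : ℕ}
    (Ω : Set (EuclideanSpace ℝ (Fin n))) (f : EuclideanSpace ℝ (Fin n) → ℝ)
    (hf : JConvexOn Ω f) (hbd : ∃ m : ℝ, ∀ x ∈ Ω, m ≤ f x) :
    (∀ x ∈ convexHull ℝ Ω, (roofSet Ω f x).Nonempty ∧ BddBelow (roofSet Ω f x)) ∧
    ConvexOn ℝ (convexHull ℝ Ω) (convexRoof Ω f) ∧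
    ∀ x ∈ Ω, convexRoof Ω f x = f x := by
  obtain ⟨m, hm⟩ := hbd
  have hroof : ∀ x ∈ convexHull ℝ Ω, (roofSet Ω f x).Nonempty ∧ BddBelow (roofSet Ω f x) :=
    fun x hx => ⟨roofSet_nonempty hx, m, mem_lowerBounds_roofSet hm x⟩
  exact ⟨hroof, convexOn_convexRoof fun x hx => (hroof x hx).2,
    fun x hx => (isLeast_roofSet hf hx).csInf_eq⟩
end

section
/- A convex function on a bounded convex subset Ω ⊆ ℝ^n can be extended to a real-valued convex function on all of ℝ^n if and only if it is Lipschitz on Ω. -/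
/-!
A convex function on all of `ℝⁿ` is locally Lipschitz, hence Lipschitz on the compact closure of
the bounded set `Ω`. Conversely, if `f` is `K`-Lipschitz on `Ω`, the McShane extension
`x ↦ inf_{y ∈ Ω} (f y + K ‖x - y‖)` agrees with `f` on `Ω` and is convex: it is the infimal
convolution of `f` (convex on `Ω`) with the convex function `K ‖·‖`.
-/

open Set Bornology NNReal

section McShane

variable {E : Type*} [SeminormedAddCommGroup E] {s : Set E} {f : E → ℝ} {K : ℝ≥0}

noncomputable def mcShaneExtension (s : Set E) (f : E → ℝ) (K : ℝ≥0) (x : E) : ℝ :=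
  ⨅ y : s, f y + K * ‖x - y‖

lemma LipschitzOnWith.mcShaneExtension_le (hf : LipschitzOnWith K f s) {y : E} (hy : y ∈ s)
    (x : E) : mcShaneExtension s f K x ≤ f y + K * ‖x - y‖ := by
  refine ciInf_le (f := fun z : s => f z + K * ‖x - z‖) ⟨f y - K * ‖x - y‖, ?_⟩ ⟨y, hy⟩
  rintro _ ⟨z, rfl⟩
  calc f y - K * ‖x - y‖ ≤ f z + K * ‖y - z‖ - K * ‖x - y‖ := by
        gcongr; simpa only [dist_eq_norm] using hf.le_add_mul hy z.2
    _ ≤ f z + K * (‖x - y‖ + ‖x - z‖) - K * ‖x - y‖ := by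
        gcongr; simpa only [dist_eq_norm] using dist_triangle_left y z x
    _ = f z + K * ‖x - z‖ := by ring

lemma LipschitzOnWith.eqOn_mcShaneExtension (hf : LipschitzOnWith K f s) :
    EqOn (mcShaneExtension s f K) f s := fun x hx => by
  refine le_antisymm (by simpa using hf.mcShaneExtension_le hx x) ?_
  have : Nonempty s := ⟨⟨x, hx⟩⟩
  exact le_ciInf fun y => by simpa only [dist_eq_norm] using hf.le_add_mul hx y.2

lemma ConvexOn.convexOn_mcShaneExtension [NormedSpace ℝ E] (hf : ConvexOn ℝ s f)
    (hL : LipschitzOnWith K f s) :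
    ConvexOn ℝ univ (mcShaneExtension s f K) := by
  refine ⟨convex_univ, fun x _ z _ a b ha hb hab => ?_⟩
  rcases isEmpty_or_nonempty s with _ | _
  · simp [mcShaneExtension]
  simp only [smul_eq_mul, mcShaneExtension, Real.mul_iInf_of_nonneg ha,
    Real.mul_iInf_of_nonneg hb]
  refine le_ciInf_add_ciInf fun y w => ?_
  have hnorm : ‖a • x + b • z - (a • y + b • w : E)‖ ≤ a * ‖x - y‖ + b * ‖z - w‖ := by
    rw [show a • x + b • z - (a • y + b • w : E) = a • (x - y) + b • (z - w) by module]
    simpa using convexOn_univ_norm.2 (mem_univ (x - y)) (mem_univ (z - w)) ha hb hab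
  calc ⨅ v : s, f v + K * ‖a • x + b • z - v‖
      ≤ f (a • y + b • w) + K * ‖a • x + b • z - (a • y + b • w : E)‖ :=
        hL.mcShaneExtension_le (hf.1 y.2 w.2 ha hb hab) _
    _ ≤ (a * f y + b * f w) + K * (a * ‖x - y‖ + b * ‖z - w‖) := by
        gcongr; exact hf.2 y.2 w.2 ha hb hab
    _ = a * (f y + K * ‖x - y‖) + b * (f w + K * ‖z - w‖) := by ring

end McShane

lemma ConvexOn.exists_lipschitzOnWith_of_univ_of_isBounded {E : Type*} [NormedAddCommGroup E]
    [NormedSpace ℝ E] [FiniteDimensional ℝ E] {s : Set E} {g : E → ℝ}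
    (hg : ConvexOn ℝ univ g) (hs : IsBounded s) : ∃ K, LipschitzOnWith K g s := by
  obtain ⟨K, hK⟩ :=
    hg.locallyLipschitz.locallyLipschitzOn.exists_lipschitzOnWith_of_compact hs.isCompact_closure
  exact ⟨K, hK.mono subset_closure⟩

lemma exists_lipschitzOnWith_iff_exists_abs_sub_le {E : Type*} [SeminormedAddCommGroup E]
    {s : Set E} {f : E → ℝ} :
    (∃ K, LipschitzOnWith K f s) ↔ ∃ l : ℝ, ∀ x ∈ s, ∀ y ∈ s, |f x - f y| ≤ l * ‖x - y‖ := by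
  simp only [lipschitzOnWith_iff_norm_sub_le, Real.norm_eq_abs]
  refine ⟨fun ⟨K, hK⟩ => ⟨K, fun x hx y hy => hK hx hy⟩, fun ⟨l, hl⟩ => ⟨l.toNNReal, ?_⟩⟩
  exact fun x hx y hy => (hl x hx y hy).trans (by gcongr; exact l.le_coe_toNNReal)

theorem convex_extension_iff_lipschitz_general {n : ℕ}
    (Ω : Set (EuclideanSpace ℝ (Fin n))) (hb : Bornology.IsBounded Ω)
    (f : EuclideanSpace ℝ (Fin n) → ℝ) (hf : ConvexOn ℝ Ω f) :
    (∃ g : EuclideanSpace ℝ (Fin n) → ℝ,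
        ConvexOn ℝ Set.univ g ∧ Set.EqOn g f Ω) ↔
      ∃ l : ℝ, ∀ x ∈ Ω, ∀ y ∈ Ω, |f x - f y| ≤ l * ‖x - y‖ := by
  rw [← exists_lipschitzOnWith_iff_exists_abs_sub_le]
  constructor
  · rintro ⟨g, hg, hgf⟩
    obtain ⟨K, hK⟩ := hg.exists_lipschitzOnWith_of_univ_of_isBounded hb
    exact ⟨K, fun x hx y hy => by simpa only [hgf hx, hgf hy] using hK hx hy⟩
  · rintro ⟨K, hK⟩
    exact ⟨mcShaneExtension Ω f K, hf.convexOn_mcShaneExtension hK, hK.eqOn_mcShaneExtension⟩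

/-- A convex function on a bounded convex subset `Ω ⊆ ℝⁿ` can be extended to a
real-valued convex function on all of `ℝⁿ` if and only if it is Lipschitz on `Ω`. -/
theorem convex_extension_iff_lipschitz {n : ℕ}
    (Ω : Set (EuclideanSpace ℝ (Fin n))) (hb : Bornology.IsBounded Ω)
    (hΩ : Convex ℝ Ω) (f : EuclideanSpace ℝ (Fin n) → ℝ) (hf : ConvexOn ℝ Ω f) :
    (∃ g : EuclideanSpace ℝ (Fin n) → ℝ,
        ConvexOn ℝ Set.univ g ∧ Set.EqOn g f Ω) ↔
      ∃ l : ℝ, ∀ x ∈ Ω, ∀ y ∈ Ω, |f x - f y| ≤ l * ‖x - y‖ :=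
  convex_extension_iff_lipschitz_general Ω hb f hf
end

section
/- Let Ω ⊆ ℝ^n be a bounded convex set, A a subset with closure contained in the relative interior of Ω, and f : Ω∖A → ℝ a convex function that is Lipschitz with constant l. Then any convex extension f̂ of f to Ω (obtained via the convex roof) is also Lipschitz with the same constant l on Ω. -/
open scoped BigOperators

/-!
Along the line `t ↦ y + t • (x - y)` the convex function `g` has nondecreasing slopes, so
`g x - g y` is at most the slope of `g` on any chord `[c, d]` lying further along the line.
Push the chord towards the point where the line leaves the bounded set `Ω`: that exit point lies
in the relative boundary of `Ω`, hence outside `closure A`, so near it `g = f` and the slope is at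
most `l * ‖x - y‖` by the Lipschitz bound on `f`.
-/

open Set Filter Topology AffineMap

theorem ConvexOn.slope_le_slope {𝕜 : Type*} [Field 𝕜] [LinearOrder 𝕜] [IsStrictOrderedRing 𝕜]
    {S : Set 𝕜} {φ : 𝕜 → 𝕜} (hφ : ConvexOn 𝕜 S φ) {a b c d : 𝕜}
    (ha : a ∈ S) (hb : b ∈ S) (hc : c ∈ S) (hd : d ∈ S)
    (hab : a < b) (hcd : c < d) (hac : a ≤ c) (hbd : b ≤ d) :
    (φ b - φ a) / (b - a) ≤ (φ d - φ c) / (d - c) :=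
  calc (φ b - φ a) / (b - a)
      ≤ (φ d - φ a) / (d - a) := hφ.secant_mono ha hb hd hab.ne' (by linarith) hbd
    _ = (φ a - φ d) / (a - d) := by rw [← neg_sub (φ d), ← neg_sub d, neg_div_neg_eq]
    _ ≤ (φ c - φ d) / (c - d) := hφ.secant_mono hd ha hc (by linarith) hcd.ne hac
    _ = (φ d - φ c) / (d - c) := by rw [← neg_sub (φ d), ← neg_sub d, neg_div_neg_eq]

theorem csSup_notMem_of_isOpen {α : Type*} [ConditionallyCompleteLinearOrder α]
    [TopologicalSpace α] [OrderTopology α] [DenselyOrdered α] [NoMaxOrder α] {S U : Set α}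
    (hU : IsOpen U) (hUS : U ⊆ S) (hS : BddAbove S) : sSup S ∉ U := fun hT =>
  have hU_Iio : U ⊆ Iio (sSup S) := by
    rw [← interior_Iic, ← hU.interior_eq]
    exact interior_mono fun _ ht => le_csSup hS (hUS ht)
  lt_irrefl (sSup S) (hU_Iio hT)

theorem exists_pair_mem_nhds_csSup {S W : Set ℝ} (hS : S.OrdConnected) (hbdd : BddAbove S)
    {a b : ℝ} (ha : a ∈ S) (hb : b ∈ S) (hab : a < b) (hW : W ∈ 𝓝 (sSup S)) :
    ∃ c d, a ≤ c ∧ c < d ∧ b ≤ d ∧ c ∈ S ∩ W ∧ d ∈ S ∩ W := by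
  obtain ⟨δ, hδ, hball⟩ := Metric.mem_nhds_iff.1 hW
  rw [Real.ball_eq_Ioo] at hball
  obtain ⟨s, hsS, hs⟩ := exists_lt_of_lt_csSup ⟨a, ha⟩ (sub_lt_self (sSup S) hδ)
  have hdS : max b s ∈ S := by rcases max_choice b s with h | h <;> rw [h] <;> assumption
  have hdT : max b s ≤ sSup S := le_csSup hbdd hdS
  obtain ⟨c, hc, hcd⟩ := exists_between (max_lt (hab.trans_le (le_max_left b s))
    (hs.trans_le (le_max_right b s)) : max a (sSup S - δ) < max b s)
  have hcS : c ∈ S := hS.out ha hdS ⟨(le_max_left _ _).trans hc.le, hcd.le⟩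
  refine ⟨c, max b s, (le_max_left _ _).trans hc.le, hcd, le_max_left b s,
    ⟨hcS, hball ⟨(le_max_right _ _).trans_lt hc, by linarith⟩⟩,
    ⟨hdS, hball ⟨hs.trans_le (le_max_right b s), by linarith⟩⟩⟩

theorem isOpen_preimage_intrinsicInterior {𝕜 V P X : Type*} [Ring 𝕜] [AddCommGroup V]
    [Module 𝕜 V] [TopologicalSpace P] [AddTorsor V P] [TopologicalSpace X] {s : Set P}
    {p : X → P} (hp : Continuous p) (hps : ∀ t, p t ∈ affineSpan 𝕜 s) :
    IsOpen (p ⁻¹' intrinsicInterior 𝕜 s) := by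
  let q : X → affineSpan 𝕜 s := fun t => ⟨p t, hps t⟩
  have hq : p ⁻¹' intrinsicInterior 𝕜 s = q ⁻¹' interior ((↑) ⁻¹' s) := by
    ext t
    exact ⟨fun ⟨y, hy, hyt⟩ => mem_preimage.2 ((show y = q t from Subtype.ext hyt) ▸ hy),
      fun ht => ⟨q t, ht, rfl⟩⟩
  rw [hq]
  exact isOpen_interior.preimage (hp.subtype_mk hps)

section NormedSpace

variable {E : Type*} [NormedAddCommGroup E] [NormedSpace ℝ E]

theorem isBounded_preimage_lineMap {s : Set E} (hs : Bornology.IsBounded s) {x y : E}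
    (hxy : x ≠ y) : Bornology.IsBounded (lineMap x y ⁻¹' s : Set ℝ) := by
  obtain ⟨C, hC⟩ := Metric.isBounded_iff.1 hs
  refine Metric.isBounded_iff.2 ⟨C / dist x y, fun a ha b hb => ?_⟩
  rw [le_div_iff₀ (dist_pos.2 hxy), ← dist_lineMap_lineMap]
  exact hC ha hb

theorem exists_lineMap_mem_diff_of_closure_subset_intrinsicInterior {Ω A : Set E}
    (hb : Bornology.IsBounded Ω) (hΩ : Convex ℝ Ω) (hA : closure A ⊆ intrinsicInterior ℝ Ω)
    {x y : E} (hx : x ∈ Ω) (hy : y ∈ Ω) (hxy : x ≠ y) :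
    ∃ c d : ℝ, 0 ≤ c ∧ c < d ∧ 1 ≤ d ∧
      lineMap y x c ∈ Ω \ A ∧ lineMap y x d ∈ Ω \ A := by
  set p : ℝ →ᵃ[ℝ] E := lineMap y x
  have hp : Continuous p := lineMap_continuous
  have hbdd : BddAbove (p ⁻¹' Ω) := (isBounded_preimage_lineMap hb hxy.symm).bddAbove
  have hexit : p (sSup (p ⁻¹' Ω)) ∉ closure A := fun h =>
    csSup_notMem_of_isOpen (isOpen_preimage_intrinsicInterior hp fun t =>
      lineMap_mem t (subset_affineSpan ℝ Ω hy) (subset_affineSpan ℝ Ω hx))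
      (preimage_mono intrinsicInterior_subset) hbdd (hA h)
  have hW : (p ⁻¹' closure A)ᶜ ∈ 𝓝 (sSup (p ⁻¹' Ω)) :=
    (isClosed_closure.preimage hp).isOpen_compl.mem_nhds hexit
  obtain ⟨c, d, hc, hcd, hd, ⟨hcΩ, hcA⟩, ⟨hdΩ, hdA⟩⟩ :=
    exists_pair_mem_nhds_csSup (hΩ.affine_preimage p).ordConnected hbdd
      (by simpa [p] using hy) (by simpa [p] using hx) one_pos hW
  exact ⟨c, d, hc, hcd, hd, ⟨hcΩ, fun h => hcA (subset_closure h)⟩,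
    ⟨hdΩ, fun h => hdA (subset_closure h)⟩⟩

end NormedSpace

theorem convex_extension_lipschitz_general {n : ℕ}
    (Ω A : Set (EuclideanSpace ℝ (Fin n))) (hb : Bornology.IsBounded Ω)
    (hΩ : Convex ℝ Ω) (hA : closure A ⊆ intrinsicInterior ℝ Ω)
    (f : EuclideanSpace ℝ (Fin n) → ℝ)
    (l : ℝ) (hlip : ∀ x ∈ Ω \ A, ∀ y ∈ Ω \ A, |f x - f y| ≤ l * ‖x - y‖)
    (g : EuclideanSpace ℝ (Fin n) → ℝ)
    (hg : ConvexOn ℝ Ω g) (hgf : Set.EqOn g f (Ω \ A)) :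
    ∀ x ∈ Ω, ∀ y ∈ Ω, |g x - g y| ≤ l * ‖x - y‖ := by
  suffices key : ∀ x ∈ Ω, ∀ y ∈ Ω, g x - g y ≤ l * ‖x - y‖ from fun x hx y hy =>
    abs_sub_le_iff.2 ⟨key x hx y hy, norm_sub_rev x y ▸ key y hy x hx⟩
  intro x hx y hy
  rcases eq_or_ne x y with rfl | hxy
  · simp
  obtain ⟨c, d, hc, hcd, hd, hcΩA, hdΩA⟩ :=
    exists_lineMap_mem_diff_of_closure_subset_intrinsicInterior hb hΩ hA hx hy hxy
  set p : ℝ →ᵃ[ℝ] EuclideanSpace ℝ (Fin n) := lineMap y x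
  have hslope : g x - g y ≤ (g (p d) - g (p c)) / (d - c) := by
    simpa [p] using (hg.comp_affineMap p).slope_le_slope (a := 0) (b := 1)
      (by simpa [p] using hy) (by simpa [p] using hx) hcΩA.1 hdΩA.1 one_pos hcd hc hd
  have hchord : g (p d) - g (p c) ≤ l * ‖x - y‖ * (d - c) :=
    calc g (p d) - g (p c) = f (p d) - f (p c) := by rw [hgf hdΩA, hgf hcΩA]
      _ ≤ l * ‖p d - p c‖ := (le_abs_self _).trans (hlip _ hdΩA _ hcΩA)
      _ = l * ‖x - y‖ * (d - c) := by
        rw [← dist_eq_norm, dist_lineMap_lineMap, Real.dist_eq, abs_of_pos (sub_pos.2 hcd),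
          dist_comm, dist_eq_norm]
        ring
  exact hslope.trans ((div_le_iff₀ (sub_pos.2 hcd)).2 hchord)

/-- If `Ω ⊆ ℝⁿ` is bounded and convex, `closure A ⊆ relint Ω`, and `f` is convex and
`l`-Lipschitz on `Ω \ A`, then any real-valued convex extension `f̂` of `f` to `Ω`
is `l`-Lipschitz on `Ω`. -/
theorem convex_extension_lipschitz {n : ℕ}
    (Ω A : Set (EuclideanSpace ℝ (Fin n))) (hb : Bornology.IsBounded Ω)
    (hΩ : Convex ℝ Ω) (hA : closure A ⊆ intrinsicInterior ℝ Ω)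
    (f : EuclideanSpace ℝ (Fin n) → ℝ) (hf : JConvexOn (Ω \ A) f)
    (l : ℝ) (hlip : ∀ x ∈ Ω \ A, ∀ y ∈ Ω \ A, |f x - f y| ≤ l * ‖x - y‖)
    (g : EuclideanSpace ℝ (Fin n) → ℝ)
    (hg : ConvexOn ℝ Ω g) (hgf : Set.EqOn g f (Ω \ A)) :
    ∀ x ∈ Ω, ∀ y ∈ Ω, |g x - g y| ≤ l * ‖x - y‖ :=
  convex_extension_lipschitz_general Ω A hb hΩ hA f l hlip g hg hgf
end

section
/- Let Ω ⊆ ℝ^n be a bounded convex set and A a subset with closure contained in the relative interior of Ω. Then a convex function on Ω∖A can be extended to a real-valued convex function on all of ℝ^n if and only if it is Lipschitz on Ω∖A. -/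
open scoped BigOperators

/-!
A convex function on `ℝⁿ` is locally Lipschitz, hence Lipschitz on the bounded set `Ω \ A`.

Conversely, let `l` be a Lipschitz constant and take for `g` the largest convex `L`-Lipschitz
minorant of `f`, `g z = inf (∑ wᵢ f xᵢ + L ‖z - ∑ wᵢ xᵢ‖)` over convex combinations of points
`xᵢ ∈ Ω \ A`. It is convex and `g ≤ f`; equality at `x ∈ Ω \ A` amounts to
`f x ≤ ∑ wᵢ f xᵢ + L ‖x - y‖` for `y = ∑ wᵢ xᵢ ∈ Ω`. If `y ∉ A` this is Jensen at `y` plus the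
Lipschitz bound. If `y ∈ A` and `x` lies in the relative interior of `Ω`, the ray from `y`
through `x` exits `Ω` at a relative boundary point, so beyond `x` it meets `Ω \ closure A` at
some `q`; then `x` is a convex combination of `q` and the `xᵢ`, and Jensen at `x` gives the bound
with `L = l`. If `x` lies on the relative boundary, it is at distance at least some `δ > 0` from
the compact set `closure A`, and the crude bound `f x ≤ f xᵢ + l diam Ω` suffices with
`L = l diam Ω / δ`.
-/

open Set Bornology Metric Filter Topology

section ConvexHullGraph

variable {E : Type*} [AddCommGroup E] [Module ℝ E] {s : Set E} {f : E → ℝ} {p : E × ℝ}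

lemma JConvexOn.le_of_mem_convexHull_graphOn (hf : JConvexOn s f)
    (hp : p ∈ convexHull ℝ (s.graphOn f)) (hps : p.1 ∈ s) : f p.1 ≤ p.2 := by
  obtain ⟨ι, _, w, z, hw₀, hw₁, hz, rfl⟩ := mem_convexHull_iff_exists_fintype.1 hp
  let e := (Fintype.equivFin ι).symm
  have hz' : ∀ i, (z i).1 ∈ s ∧ f (z i).1 = (z i).2 := fun i => mem_graphOn.1 (hz i)
  have hw : ∑ i, w (e i) = 1 := by rw [e.sum_comp w, hw₁]
  have hfst : ∑ i, w (e i) • (z (e i)).1 = (∑ i, w i • z i).1 := by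
    rw [e.sum_comp (fun i => w i • (z i).1), Prod.fst_sum]; rfl
  have hsnd : ∑ i, w (e i) * f (z (e i)).1 = (∑ i, w i • z i).2 := by
    rw [e.sum_comp (fun i => w i * f (z i).1), Prod.snd_sum]; simp [(hz' _).2]
  have := hf _ (fun i => (z (e i)).1) (fun i => w (e i)) (fun i => (hz' _).1) (fun i => hw₀ _) hw
    (hfst ▸ hps)
  rwa [hfst, hsnd] at this

lemma le_snd_of_mem_convexHull_graphOn {m : ℝ} (hm : ∀ x ∈ s, m ≤ f x)
    (hp : p ∈ convexHull ℝ (s.graphOn f)) : m ≤ p.2 :=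
  show p ∈ {p : E × ℝ | m ≤ p.2} from
    convexHull_min (by rintro _ ⟨x, hx, rfl⟩; exact hm x hx)
      ((convex_Ici m).linear_preimage (LinearMap.snd ℝ E ℝ)) hp

lemma fst_mem_convexHull_of_mem_convexHull_graphOn (hp : p ∈ convexHull ℝ (s.graphOn f)) :
    p.1 ∈ convexHull ℝ s :=
  show p ∈ {p : E × ℝ | p.1 ∈ convexHull ℝ s} from
    convexHull_min (by rintro _ ⟨x, hx, rfl⟩; exact subset_convexHull ℝ s hx)
      ((convex_convexHull ℝ s).linear_preimage (LinearMap.fst ℝ E ℝ)) hp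

end ConvexHullGraph

lemma convexOn_iInf_of_convexOn_prod {E F : Type*} [AddCommGroup E] [Module ℝ E]
    [AddCommGroup F] [Module ℝ F] {C : Set F} {φ : E × F → ℝ} (hφ : ConvexOn ℝ (univ ×ˢ C) φ)
    (hbdd : ∀ z, BddBelow (range fun p : C => φ (z, p))) :
    ConvexOn ℝ univ fun z => ⨅ p : C, φ (z, p) := by
  refine ⟨convex_univ, fun a _ b _ ta tb hta htb hab => ?_⟩
  simp only [smul_eq_mul]
  cases isEmpty_or_nonempty C
  · simp [Real.iInf_of_isEmpty]
  rw [Real.mul_iInf_of_nonneg hta, Real.mul_iInf_of_nonneg htb]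
  refine le_ciInf_add_ciInf fun p q => ?_
  have hmem : (ta • (a, p.1) + tb • (b, q.1)) ∈ univ ×ˢ C :=
    hφ.1 (mk_mem_prod trivial p.2) (mk_mem_prod trivial q.2) hta htb hab
  calc ⨅ r : C, φ (ta • a + tb • b, r) ≤ φ (ta • a + tb • b, (⟨_, hmem.2⟩ : C)) :=
        ciInf_le (hbdd _) _
    _ = φ (ta • (a, p.1) + tb • (b, q.1)) := rfl
    _ ≤ ta * φ (a, p) + tb * φ (b, q) :=
      hφ.2 (mk_mem_prod trivial p.2) (mk_mem_prod trivial q.2) hta htb hab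

section Minorant

variable {E : Type*} [NormedAddCommGroup E] [NormedSpace ℝ E]

/-- The largest convex `L`-Lipschitz function below `f` on `s`: the infimal convolution of the
convex envelope of `f` on `s` with `L ‖·‖`. -/
noncomputable def convexLipschitzMinorant (s : Set E) (f : E → ℝ) (L : ℝ) (z : E) : ℝ :=
  ⨅ p : convexHull ℝ (s.graphOn f), p.1.2 + L * ‖z - p.1.1‖

variable {s : Set E} {f : E → ℝ} {L : ℝ}

lemma convexOn_convexLipschitzMinorant (hL : 0 ≤ L) (hf : BddBelow (f '' s)) :
    ConvexOn ℝ univ (convexLipschitzMinorant s f L) := by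
  obtain ⟨m, hm⟩ := hf
  refine convexOn_iInf_of_convexOn_prod (φ := fun q : E × E × ℝ => q.2.2 + L * ‖q.1 - q.2.1‖)
    ?_ fun z => ⟨m, ?_⟩
  · have hsnd : ConvexOn ℝ univ fun q : E × E × ℝ => q.2.2 :=
      (LinearMap.snd ℝ E ℝ ∘ₗ LinearMap.snd ℝ E (E × ℝ)).convexOn convex_univ
    have hnorm := ((convexOn_norm convex_univ).comp_linearMap
      (LinearMap.fst ℝ E (E × ℝ) - LinearMap.fst ℝ E ℝ ∘ₗ LinearMap.snd ℝ E (E × ℝ))).smul hL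
    exact (hsnd.add hnorm).subset (subset_univ _) (convex_univ.prod (convex_convexHull ℝ _))
  · rintro _ ⟨p, rfl⟩
    have := le_snd_of_mem_convexHull_graphOn (fun x hx => hm (mem_image_of_mem f hx)) p.2
    have : 0 ≤ L * ‖z - p.1.1‖ := by positivity
    dsimp only
    linarith

lemma convexLipschitzMinorant_le (hL : 0 ≤ L) (hf : BddBelow (f '' s)) {x : E} (hx : x ∈ s) :
    convexLipschitzMinorant s f L x ≤ f x := by
  obtain ⟨m, hm⟩ := hf
  refine (ciInf_le ⟨m, ?_⟩ ⟨(x, f x), subset_convexHull ℝ _ ⟨x, hx, rfl⟩⟩).trans_eq (by simp)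
  rintro _ ⟨p, rfl⟩
  have := le_snd_of_mem_convexHull_graphOn (fun x hx => hm (mem_image_of_mem f hx)) p.2
  have : 0 ≤ L * ‖x - p.1.1‖ := by positivity
  dsimp only
  linarith

lemma le_convexLipschitzMinorant {x : E} (hx : x ∈ s)
    (h : ∀ p ∈ convexHull ℝ (s.graphOn f), f x ≤ p.2 + L * ‖x - p.1‖) :
    f x ≤ convexLipschitzMinorant s f L x :=
  have : Nonempty (convexHull ℝ (s.graphOn f)) := ⟨⟨_, subset_convexHull ℝ _ ⟨x, hx, rfl⟩⟩⟩
  le_ciInf fun p => h p.1 p.2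

end Minorant

section IntrinsicInterior

variable {E : Type*} [NormedAddCommGroup E] [NormedSpace ℝ E] {Ω F : Set E}

lemma eventually_add_smul_mem_of_mem_intrinsicInterior {x v : E}
    (hx : x ∈ intrinsicInterior ℝ Ω) (hv : v ∈ (affineSpan ℝ Ω).direction) :
    ∀ᶠ t in 𝓝 (0 : ℝ), x + t • v ∈ Ω := by
  obtain ⟨y, hy, rfl⟩ := mem_intrinsicInterior.1 hx
  let γ : ℝ → affineSpan ℝ Ω := fun t =>
    ⟨t • v +ᵥ (y : E), AffineSubspace.vadd_mem_of_mem_direction (Submodule.smul_mem _ t hv) y.2⟩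
  have hγ : Tendsto γ (𝓝 0) (𝓝 y) :=
    (continuous_induced_rng.2 (by fun_prop)).tendsto' 0 y (by ext; simp [γ])
  filter_upwards [hγ.eventually (isOpen_interior.mem_nhds hy)] with t ht
  simpa [γ, add_comm] using interior_subset ht

lemma exists_pos_add_smul_sub_mem_diff (hb : IsBounded Ω) (hF : IsClosed F)
    (hFΩ : F ⊆ intrinsicInterior ℝ Ω) {x y : E} (hx : x ∈ intrinsicInterior ℝ Ω) (hy : y ∈ Ω)
    (hxy : x ≠ y) : ∃ t > (0 : ℝ), x + t • (x - y) ∈ Ω \ F := by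
  set v := x - y
  have hv : v ∈ (affineSpan ℝ Ω).direction := AffineSubspace.vsub_mem_direction
    (subset_affineSpan ℝ Ω (intrinsicInterior_subset hx)) (subset_affineSpan ℝ Ω hy)
  have hpos {p : E} (hp : p ∈ intrinsicInterior ℝ Ω) : ∃ t > (0 : ℝ), p + t • v ∈ Ω := by
    obtain ⟨t, hmem, ht⟩ := (((eventually_add_smul_mem_of_mem_intrinsicInterior hp hv).filter_mono
      nhdsWithin_le_nhds).and (self_mem_nhdsWithin : Ioi (0 : ℝ) ∈ 𝓝[>] 0)).exists
    exact ⟨t, ht, hmem⟩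
  set T := {t : ℝ | 0 < t ∧ x + t • v ∈ Ω}
  have hTne : T.Nonempty := (hpos hx).imp fun _ ht => ht
  have hTbdd : BddAbove T := by
    refine ⟨diam Ω / ‖v‖, fun t ht => (le_div_iff₀ (norm_pos_iff.2 (sub_ne_zero.2 hxy))).2 ?_⟩
    calc t * ‖v‖ = dist (x + t • v) x := by simp [norm_smul, abs_of_pos ht.1]
      _ ≤ diam Ω := dist_le_diam_of_mem hb ht.2 (intrinsicInterior_subset hx)
  -- the ray leaves `Ω` at `x + t₀ • v`, which is not in the relative interior, hence not in `F`
  set t₀ := sSup T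
  have ht₀ : 0 < t₀ := hTne.some_mem.1.trans_le (le_csSup hTbdd hTne.some_mem)
  have hnot : x + t₀ • v ∉ F := by
    intro h
    obtain ⟨s, hs, hmem⟩ := hpos (hFΩ h)
    have : t₀ + s ∈ T := ⟨by linarith, by rwa [add_smul, ← add_assoc]⟩
    linarith [le_csSup hTbdd this]
  have hU : {t : ℝ | x + t • v ∉ F} ∈ 𝓝 t₀ :=
    (hF.isOpen_compl.preimage (by fun_prop)).mem_nhds hnot
  obtain ⟨t, htF, htT⟩ := mem_closure_iff_nhds.1 (csSup_mem_closure hTne hTbdd) _ hU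
  exact ⟨t, htT.1, htT.2, htF⟩

lemma exists_pos_le_dist_of_notMem_intrinsicInterior [FiniteDimensional ℝ E] (hF : IsCompact F)
    (hFΩ : F ⊆ intrinsicInterior ℝ Ω) :
    ∃ δ > 0, ∀ x ∈ Ω \ intrinsicInterior ℝ Ω, ∀ z ∈ F, δ ≤ dist x z := by
  have hdisj : Disjoint F (intrinsicFrontier ℝ Ω) := by
    rw [← intrinsicClosure_sdiff_intrinsicInterior]
    exact disjoint_sdiff_right.mono_left hFΩ
  obtain ⟨r, hr, hlt⟩ := Metric.exists_pos_forall_lt_edist hF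
    (isClosed_intrinsicFrontier (AffineSubspace.closed_of_finiteDimensional _)) hdisj
  refine ⟨r, hr, fun x hx z hz => ?_⟩
  have hxF : x ∈ intrinsicFrontier ℝ Ω := by
    rw [← intrinsicClosure_sdiff_intrinsicInterior]
    exact ⟨subset_intrinsicClosure hx.1, hx.2⟩
  have := hlt z hz x hxF
  rw [edist_nndist, ENNReal.coe_lt_coe, ← NNReal.coe_lt_coe, coe_nndist, dist_comm] at this
  exact this.le

end IntrinsicInterior

section Band

variable {E : Type*} [NormedAddCommGroup E] [NormedSpace ℝ E] {s : Set E} {f : E → ℝ} {K : NNReal}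
  {x : E} {p : E × ℝ}

lemma JConvexOn.le_snd_add_mul_norm_sub_of_fst_mem (hf : JConvexOn s f)
    (hlip : LipschitzOnWith K f s) (hx : x ∈ s) (hp : p ∈ convexHull ℝ (s.graphOn f))
    (hps : p.1 ∈ s) : f x ≤ p.2 + K * ‖x - p.1‖ := by
  have := hlip.le_add_mul hx hps
  rw [dist_eq_norm] at this
  linarith [hf.le_of_mem_convexHull_graphOn hp hps]

/-- `x` is a convex combination of `q = x + t • (x - p.1) ∈ s` and of `p`, so Jensen at `x`
combined with the Lipschitz bound at `q` gives the estimate. -/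
lemma JConvexOn.le_snd_add_mul_norm_sub_of_add_smul_mem (hf : JConvexOn s f)
    (hlip : LipschitzOnWith K f s) (hx : x ∈ s) (hp : p ∈ convexHull ℝ (s.graphOn f)) {t : ℝ}
    (ht : 0 < t) (hq : x + t • (x - p.1) ∈ s) : f x ≤ p.2 + K * ‖x - p.1‖ := by
  set q := x + t • (x - p.1)
  set a := (1 + t)⁻¹
  have ha : a * (1 + t) = 1 := inv_mul_cancel₀ (by positivity)
  have hr : a • (q, f q) + (t * a) • p ∈ convexHull ℝ (s.graphOn f) :=
    convex_convexHull ℝ _ (subset_convexHull ℝ _ (mem_graphOn.2 ⟨hq, rfl⟩)) hp (by positivity)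
      (by positivity) (by linear_combination ha)
  have hr₁ : (a • (q, f q) + (t * a) • p).1 = x := by
    simp only [Prod.fst_add, Prod.smul_fst, q]
    linear_combination (norm := module) ha • x
  have hjensen := hf.le_of_mem_convexHull_graphOn hr (hr₁ ▸ hx)
  rw [hr₁] at hjensen
  have hfq := hlip.le_add_mul hq hx
  rw [dist_eq_norm, add_sub_cancel_left, norm_smul, Real.norm_of_nonneg ht.le] at hfq
  simp only [Prod.snd_add, Prod.smul_snd, smul_eq_mul] at hjensen
  have hcleared : (1 + t) * f x ≤ f q + t * p.2 :=
    calc (1 + t) * f x ≤ (1 + t) * (a * f q + t * a * p.2) := by gcongr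
      _ = f q + t * p.2 := by linear_combination (f q + t * p.2) * ha
  have : t * f x ≤ t * (p.2 + K * ‖x - p.1‖) := by linarith
  exact le_of_mul_le_mul_left this ht

lemma LipschitzOnWith.le_snd_add_mul_norm_sub_of_le_norm (hlip : LipschitzOnWith K f s)
    (hs : IsBounded s) (hx : x ∈ s) (hp : p ∈ convexHull ℝ (s.graphOn f)) {δ : ℝ} (hδ : 0 < δ)
    (hδx : δ ≤ ‖x - p.1‖) : f x ≤ p.2 + K * diam s / δ * ‖x - p.1‖ := by
  have hlow : f x - K * diam s ≤ p.2 := by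
    refine le_snd_of_mem_convexHull_graphOn (fun y hy => ?_) hp
    have := hlip.le_add_mul hx hy
    have : K * dist x y ≤ K * diam s := by gcongr; exact dist_le_diam_of_mem hs hx hy
    linarith
  have : K * diam s ≤ K * diam s / δ * ‖x - p.1‖ := by
    rw [div_mul_eq_mul_div, le_div_iff₀ hδ]
    gcongr
  linarith

lemma exists_le_snd_add_mul_norm_sub [FiniteDimensional ℝ E] {Ω A : Set E} (hb : IsBounded Ω)
    (hΩ : Convex ℝ Ω) (hA : closure A ⊆ intrinsicInterior ℝ Ω) (hf : JConvexOn (Ω \ A) f)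
    (hlip : LipschitzOnWith K f (Ω \ A)) :
    ∃ L ≥ (0 : ℝ), ∀ x ∈ Ω \ A, ∀ p ∈ convexHull ℝ ((Ω \ A).graphOn f),
      f x ≤ p.2 + L * ‖x - p.1‖ := by
  have hAΩ : A ⊆ Ω := subset_closure.trans (hA.trans intrinsicInterior_subset)
  obtain ⟨δ, hδ, hsep⟩ := exists_pos_le_dist_of_notMem_intrinsicInterior
    (hb.subset hAΩ).isCompact_closure hA
  set L := max (K : ℝ) (K * diam (Ω \ A) / δ)
  refine ⟨L, (K.coe_nonneg).trans (le_max_left _ _), fun x hx p hp => ?_⟩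
  have hp₁ : p.1 ∈ Ω :=
    convexHull_min sdiff_subset hΩ (fst_mem_convexHull_of_mem_convexHull_graphOn hp)
  by_cases hpA : p.1 ∈ A
  · by_cases hxΩ : x ∈ intrinsicInterior ℝ Ω
    · obtain ⟨t, ht, hq, hqA⟩ := exists_pos_add_smul_sub_mem_diff hb isClosed_closure hA hxΩ hp₁
        fun h => hx.2 (h ▸ hpA)
      refine (hf.le_snd_add_mul_norm_sub_of_add_smul_mem hlip hx hp ht
        ⟨hq, fun h => hqA (subset_closure h)⟩).trans ?_
      gcongr
      exact le_max_left _ _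
    · have hδx := hsep x ⟨hx.1, hxΩ⟩ p.1 (subset_closure hpA)
      rw [dist_eq_norm] at hδx
      refine (hlip.le_snd_add_mul_norm_sub_of_le_norm (hb.subset sdiff_subset) hx hp hδ
        hδx).trans ?_
      gcongr
      exact le_max_right _ _
  · refine (hf.le_snd_add_mul_norm_sub_of_fst_mem hlip hx hp ⟨hp₁, hpA⟩).trans ?_
    gcongr
    exact le_max_left _ _

theorem exists_convexOn_univ_eqOn_of_lipschitzOnWith [FiniteDimensional ℝ E] {Ω A : Set E}
    (hb : IsBounded Ω) (hΩ : Convex ℝ Ω) (hA : closure A ⊆ intrinsicInterior ℝ Ω)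
    (hf : JConvexOn (Ω \ A) f) (hlip : LipschitzOnWith K f (Ω \ A)) :
    ∃ g : E → ℝ, ConvexOn ℝ univ g ∧ EqOn g f (Ω \ A) := by
  obtain ⟨L, hL, hkey⟩ := exists_le_snd_add_mul_norm_sub hb hΩ hA hf hlip
  have hbdd : BddBelow (f '' (Ω \ A)) := (isBounded_image_iff.2 ⟨K * diam (Ω \ A),
    fun x hx y hy => (hlip.dist_le_mul x hx y hy).trans
      (by gcongr; exact dist_le_diam_of_mem (hb.subset sdiff_subset) hx hy)⟩).bddBelow
  exact ⟨convexLipschitzMinorant (Ω \ A) f L, convexOn_convexLipschitzMinorant hL hbdd,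
    fun x hx => (convexLipschitzMinorant_le hL hbdd hx).antisymm
      (le_convexLipschitzMinorant hx (hkey x hx))⟩

end Band

theorem ConvexOn.exists_lipschitzOnWith_of_isBounded_of_univ {E : Type*} [NormedAddCommGroup E]
    [NormedSpace ℝ E] [FiniteDimensional ℝ E] {g : E → ℝ} (hg : ConvexOn ℝ univ g) {s : Set E}
    (hs : IsBounded s) : ∃ K, LipschitzOnWith K g s :=
  ((hg.locallyLipschitzOn isOpen_univ).mono (subset_univ _)
    |>.exists_lipschitzOnWith_of_compact hs.isCompact_closure).imp
    fun _ hK => hK.mono subset_closure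

/-- Convex boundary band extension: for bounded convex `Ω` and `A` with
`closure A ⊆ relint Ω`, a convex function on `Ω \ A` extends to a real-valued convex
function on all of `ℝⁿ` if and only if it is Lipschitz on `Ω \ A`. -/
theorem band_extension_iff_lipschitz {n : ℕ}
    (Ω A : Set (EuclideanSpace ℝ (Fin n))) (hb : Bornology.IsBounded Ω)
    (hΩ : Convex ℝ Ω) (hA : closure A ⊆ intrinsicInterior ℝ Ω)
    (f : EuclideanSpace ℝ (Fin n) → ℝ) (hf : JConvexOn (Ω \ A) f) :
    (∃ g : EuclideanSpace ℝ (Fin n) → ℝ,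
        ConvexOn ℝ Set.univ g ∧ Set.EqOn g f (Ω \ A)) ↔
      ∃ l : ℝ, ∀ x ∈ Ω \ A, ∀ y ∈ Ω \ A, |f x - f y| ≤ l * ‖x - y‖ := by
  constructor
  · rintro ⟨g, hg, hgf⟩
    obtain ⟨K, hK⟩ := hg.exists_lipschitzOnWith_of_isBounded_of_univ (hb.subset sdiff_subset)
    refine ⟨K, fun x hx y hy => ?_⟩
    simpa [← hgf hx, ← hgf hy, dist_eq_norm] using hK.dist_le_mul x hx y hy
  · rintro ⟨l, hl⟩
    exact exists_convexOn_univ_eqOn_of_lipschitzOnWith hb hΩ hA hf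
      (LipschitzOnWith.of_dist_le' fun x hx y hy => by simpa [dist_eq_norm] using hl x hx y hy)
end

section
/- Let γ : [0,∞) → ℝ be a C² function with γ = 0 on [0,1] and such that t ↦ γ'(t)/t is strictly increasing on (1,∞). Then the function g(x) = γ(‖x‖) on ℝ^n has positive semidefinite Hessian everywhere, and positive definite Hessian at every x with ‖x‖ > 1. Explicitly, H_g(v) at x equals (1/‖x‖)(γ'(‖x‖)‖v‖² + d(t⁻¹γ'(t))/dt|_{t=‖x‖}(x·v)²). -/
/-!
With `h t = γ'(t) / t`, the gradient of `g = γ ∘ ‖·‖` at `y ≠ 0` is `h ‖y‖ • y`; differentiating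
once more gives `h(‖x‖) ‖v‖² + h'(‖x‖) ⟪x, v⟫² / ‖x‖`, which is the stated formula.
Since `γ` vanishes on `[0, 1]`, so does `γ'` (by continuity also at the endpoints), hence `h` is
zero on `[0, 1]`; being strictly increasing on `(1, ∞)` and continuous at `1`, `h` is monotone on
`[0, ∞)`. Thus `h ≥ 0`, `h' ≥ 0` and `h > 0` beyond `1`, so both terms are nonnegative, and the
first is positive when `‖x‖ > 1` and `v ≠ 0`. At the origin `g` vanishes identically nearby.
-/

open Set Filter Topology
open scoped RealInnerProductSpace

theorem eqOn_deriv_zero_of_eqOn_zero {f : ℝ → ℝ} {a b : ℝ} (hab : a < b)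
    (hf : Continuous (deriv f)) (h : EqOn f 0 (Icc a b)) : EqOn (deriv f) 0 (Icc a b) := by
  have hIoo : EqOn (deriv f) 0 (Ioo a b) := fun t ht => by
    simp [((h.mono Ioo_subset_Icc_self).eventuallyEq_of_mem (Ioo_mem_nhds ht.1 ht.2)).deriv_eq]
  exact hIoo.of_subset_closure hf.continuousOn continuousOn_const Ioo_subset_Icc_self
    (closure_Ioo hab.ne).ge

section RadialProfile

variable {γ : ℝ → ℝ}

theorem monotoneOn_deriv_div_self (hγ : Continuous (deriv γ))
    (h0 : EqOn γ 0 (Icc 0 1)) (hmono : StrictMonoOn (fun t => deriv γ t / t) (Ioi 1)) :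
    MonotoneOn (fun t => deriv γ t / t) (Ici 0) := by
  have hzero := eqOn_deriv_zero_of_eqOn_zero one_pos hγ h0
  have hIci : MonotoneOn (fun t => deriv γ t / t) (Ici 1) := by
    rw [← Ioi_insert]
    refine hmono.monotoneOn.insert_of_continuousWithinAt
      (mem_closure_iff_clusterPt.mp (by simp)) ?_
    exact (hγ.continuousAt.div continuousAt_id one_ne_zero).continuousWithinAt
  rw [← Icc_union_Ici_eq_Ici zero_le_one]
  refine MonotoneOn.union_right (fun s hs t ht _ => ?_) hIci (isGreatest_Icc zero_le_one)
    isLeast_Ici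
  simp [hzero hs, hzero ht]

theorem deriv_deriv_div_self_nonneg (hγ : Continuous (deriv γ))
    (h0 : EqOn γ 0 (Icc 0 1)) (hmono : StrictMonoOn (fun t => deriv γ t / t) (Ioi 1))
    {t : ℝ} (ht : 0 < t) : 0 ≤ deriv (fun t => deriv γ t / t) t := by
  rw [← derivWithin_of_isOpen isOpen_Ioi ht]
  exact ((monotoneOn_deriv_div_self hγ h0 hmono).mono Ioi_subset_Ici_self).derivWithin_nonneg

theorem deriv_nonneg_of_pos (hγ : Continuous (deriv γ))
    (h0 : EqOn γ 0 (Icc 0 1)) (hmono : StrictMonoOn (fun t => deriv γ t / t) (Ioi 1))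
    {t : ℝ} (ht : 0 < t) : 0 ≤ deriv γ t := by
  -- comparing with the junk value `deriv γ 0 / 0 = 0`
  have h : deriv γ 0 / 0 ≤ deriv γ t / t :=
    monotoneOn_deriv_div_self hγ h0 hmono (mem_Ici.2 le_rfl) ht.le ht.le
  rwa [div_zero, le_div_iff₀ ht, zero_mul] at h

theorem deriv_pos_of_one_lt (hγ : Continuous (deriv γ))
    (h0 : EqOn γ 0 (Icc 0 1)) (hmono : StrictMonoOn (fun t => deriv γ t / t) (Ioi 1))
    {t : ℝ} (ht : 1 < t) : 0 < deriv γ t := by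
  obtain ⟨s, hs, hst⟩ := exists_between ht
  have h : deriv γ 0 / 0 < deriv γ t / t :=
    (monotoneOn_deriv_div_self hγ h0 hmono (mem_Ici.2 le_rfl) (zero_le_one.trans hs.le)
      (zero_le_one.trans hs.le)).trans_lt (hmono hs ht hst)
  rwa [div_zero, lt_div_iff₀ (zero_lt_one.trans ht), zero_mul] at h

end RadialProfile

section Radial

variable {E : Type*} [NormedAddCommGroup E] [InnerProductSpace ℝ E]

theorem hasFDerivAt_norm_of_ne_zero {x : E} (hx : x ≠ 0) :
    HasFDerivAt (‖·‖) (‖x‖⁻¹ • innerSL ℝ x) x := by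
  have hsqrt := (hasStrictFDerivAt_norm_sq x).hasFDerivAt.sqrt
    (pow_ne_zero 2 (norm_ne_zero_iff.2 hx))
  simp only [Real.sqrt_sq (norm_nonneg _)] at hsqrt
  refine hsqrt.congr_fderiv ?_
  ext y
  simp only [smul_apply, coe_innerSL_apply, nsmul_eq_mul, Nat.cast_ofNat, smul_eq_mul]
  field_simp

theorem HasDerivAt.hasFDerivAt_comp_norm {f : ℝ → ℝ} {f' : ℝ} {x : E}
    (hf : HasDerivAt f f' ‖x‖) (hx : x ≠ 0) :
    HasFDerivAt (fun y : E => f ‖y‖) ((f' / ‖x‖) • innerSL ℝ x) x := by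
  refine (hf.comp_hasFDerivAt x (hasFDerivAt_norm_of_ne_zero hx)).congr_fderiv ?_
  rw [smul_smul, div_eq_mul_inv]

theorem fderiv_comp_norm_eventuallyEq {γ : ℝ → ℝ} (hγ : Differentiable ℝ γ) {x : E} (hx : x ≠ 0) :
    fderiv ℝ (fun y : E => γ ‖y‖) =ᶠ[𝓝 x] fun y => (deriv γ ‖y‖ / ‖y‖) • innerSL ℝ y := by
  filter_upwards [isOpen_ne.mem_nhds hx] with y hy
  exact ((hγ _).hasDerivAt.hasFDerivAt_comp_norm hy).fderiv

theorem iteratedFDeriv_two_comp_norm_apply {γ : ℝ → ℝ} (hγ : Differentiable ℝ γ) {x : E}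
    (hx : x ≠ 0) (hγ' : DifferentiableAt ℝ (deriv γ) ‖x‖) (v : E) :
    iteratedFDeriv ℝ 2 (fun y : E => γ ‖y‖) x ![v, v] =
      (1 / ‖x‖) * (deriv γ ‖x‖ * ‖v‖ ^ 2 + deriv (fun t => deriv γ t / t) ‖x‖ * ⟪x, v⟫ ^ 2) := by
  have hr : ‖x‖ ≠ 0 := norm_ne_zero_iff.2 hx
  have hcoeff : HasDerivAt (fun t => deriv γ t / t) (deriv (fun t => deriv γ t / t) ‖x‖) ‖x‖ :=
    (hγ'.div differentiableAt_id hr).hasDerivAt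
  have hgrad := (hcoeff.hasFDerivAt_comp_norm hx).fun_smul (innerSL ℝ).hasFDerivAt
  rw [iteratedFDeriv_two_apply, (fderiv_comp_norm_eventuallyEq hγ hx).fderiv_eq, hgrad.fderiv]
  simp only [Matrix.cons_val_zero, Matrix.cons_val_one, Matrix.cons_val_fin_one, add_apply,
    smul_apply, ContinuousLinearMap.smulRight_apply, coe_innerSL_apply, smul_eq_mul]
  rw [innerSL_apply_apply, innerSL_apply_apply, real_inner_self_eq_norm_sq]
  field_simp

theorem iteratedFDeriv_comp_norm_zero {γ : ℝ → ℝ} {r : ℝ} (hr : 0 < r)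
    (h0 : EqOn γ 0 (Icc 0 r)) (k : ℕ) : iteratedFDeriv ℝ k (fun y : E => γ ‖y‖) 0 = 0 := by
  have hev : (fun y : E => γ ‖y‖) =ᶠ[𝓝 0] 0 := by
    filter_upwards [Metric.ball_mem_nhds 0 hr] with y hy
    exact h0 ⟨norm_nonneg y, (mem_ball_zero_iff.1 hy).le⟩
  rw [(hev.iteratedFDeriv ℝ k).eq_of_nhds, iteratedFDeriv_zero, Pi.zero_apply]

end Radial

/-- For a C² function `γ` vanishing on `[0,1]` with `t ↦ γ'(t)/t` strictly increasing on
`(1,∞)`, the radial function `g(x) = γ(‖x‖)` on `ℝⁿ` has positive semidefinite Hessian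
everywhere, positive definite Hessian whenever `‖x‖ > 1`, and its Hessian quadratic form
at `x ≠ 0` is given by the explicit formula
`(1/‖x‖)(γ'(‖x‖)‖v‖² + (d/dt)(t⁻¹γ'(t))|_{t=‖x‖} ⟨x,v⟩²)`. -/
theorem radial_hessian {n : ℕ} (γ : ℝ → ℝ) (hγ : ContDiff ℝ 2 γ)
    (h0 : ∀ t ∈ Set.Icc (0 : ℝ) 1, γ t = 0)
    (hmono : StrictMonoOn (fun t => deriv γ t / t) (Set.Ioi (1 : ℝ))) :
    (∀ (x v : EuclideanSpace ℝ (Fin n)),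
        0 ≤ iteratedFDeriv ℝ 2 (fun y : EuclideanSpace ℝ (Fin n) => γ ‖y‖) x ![v, v]) ∧
    (∀ (x v : EuclideanSpace ℝ (Fin n)), 1 < ‖x‖ → v ≠ 0 →
        0 < iteratedFDeriv ℝ 2 (fun y : EuclideanSpace ℝ (Fin n) => γ ‖y‖) x ![v, v]) ∧
    (∀ (x v : EuclideanSpace ℝ (Fin n)), x ≠ 0 →
        iteratedFDeriv ℝ 2 (fun y : EuclideanSpace ℝ (Fin n) => γ ‖y‖) x ![v, v] =
          (1 / ‖x‖) * (deriv γ ‖x‖ * ‖v‖ ^ 2 +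
            deriv (fun t => deriv γ t / t) ‖x‖ * ⟪x, v⟫ ^ 2)) := by
  have hγ' : Continuous (deriv γ) := hγ.continuous_deriv one_le_two
  have hformula (x v : EuclideanSpace ℝ (Fin n)) (hx : x ≠ 0) :=
    iteratedFDeriv_two_comp_norm_apply (hγ.differentiable two_ne_zero) hx
      (hγ.differentiable_deriv_two _) v
  refine ⟨fun x v => ?_, fun x v hx hv => ?_, hformula⟩
  · rcases eq_or_ne x 0 with rfl | hx
    · simp [iteratedFDeriv_comp_norm_zero one_pos h0]
    have hr : 0 < ‖x‖ := norm_pos_iff.2 hx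
    rw [hformula x v hx]
    exact mul_nonneg (by positivity) (add_nonneg
      (mul_nonneg (deriv_nonneg_of_pos hγ' h0 hmono hr) (sq_nonneg _))
      (mul_nonneg (deriv_deriv_div_self_nonneg hγ' h0 hmono hr) (sq_nonneg _)))
  · have hr : 0 < ‖x‖ := one_pos.trans hx
    rw [hformula x v (norm_pos_iff.1 hr)]
    exact mul_pos (by positivity) (add_pos_of_pos_of_nonneg
      (mul_pos (deriv_pos_of_one_lt hγ' h0 hmono hx) (by positivity))
      (mul_nonneg (deriv_deriv_div_self_nonneg hγ' h0 hmono hr) (sq_nonneg _)))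
end

section
/- In polar coordinates on ℝ², the function f(r,θ) = r² + aθ on the slit annulus Ω = {re^{iθ} : |r-1| < ε, 0 < θ < 2π} (with ε small and 0 < |a| < 2(1-ε)²) is locally convex (has positive definite Hessian at every point of Ω) but is not convex on Ω: there exist points x₁,…,xₖ ∈ Ω and a convex combination x ∈ Ω violating Jensen's inequality. -/
open scoped BigOperators Real

/-- The continuous angular coordinate `θ ∈ (0, 2π]` on the plane slit along the
nonnegative real axis. -/
noncomputable def theta (z : ℂ) : ℝ :=
  if 0 < Complex.arg z then Complex.arg z else Complex.arg z + 2 * π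

/-!
Near a point `z` of the slit annulus take a ball off the slit and outside the circle of radius
`1 - ε`; there `θ w = π + arg (-w)`, and along a segment `t ↦ x + t v` the derivative
`2⟪x + t v, v⟫ + a Im (v / (x + t v))` of `‖·‖² + a θ` is monotone, since its increments are
`(t₂ - t₁) (2‖v‖² - a Im (v² / (u₁ u₂)))` and `|a| < 2 (1 - ε)² ≤ 2 ‖u₁‖ ‖u₂‖`.

Globally, for `a > 0` Jensen fails across the slit: with `x = e^{iδ}`, the point
`s = ¼ x + ¾ x̄` lies just below the slit, so `θ s > 3π/2`, while the weighted average of `θ`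
is `3π/2 - δ/2`; this gain `a δ / 2` beats the loss `≤ sin² δ ≤ δ²` in `‖·‖²` once `δ ≤ a / 2`.
Conjugation sends `θ` to `2π - θ` and so reduces `a < 0` to `a > 0`.
-/

open Set Real Complex ComplexConjugate

namespace JConvexOn

variable {E F : Type*} [AddCommGroup E] [Module ℝ E] [AddCommGroup F] [Module ℝ F]
  {s t : Set E} {f g : E → ℝ}

theorem _root_.ConvexOn.jConvexOn_of_subset (hf : ConvexOn ℝ s f) (hts : t ⊆ s) : JConvexOn t f :=
  fun _ _ _ hx hw hw₁ _ => hf.map_sum_le (fun i _ => hw i) hw₁ (fun i _ => hts (hx i))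

theorem congr (h : JConvexOn s f) (hfg : EqOn f g s) : JConvexOn s g := by
  intro k x w hx hw hw₁ hmem
  rw [← hfg hmem]
  simpa only [hfg (hx _)] using h k x w hx hw hw₁ hmem

theorem add_const (h : JConvexOn s f) (b : ℝ) : JConvexOn s (fun x => f x + b) := by
  intro k x w hx hw hw₁ hmem
  simp only [mul_add, Finset.sum_add_distrib, ← Finset.sum_mul, hw₁, one_mul]
  exact add_le_add_left (h k x w hx hw hw₁ hmem) b

theorem comp_linearMap (h : JConvexOn s f) (L : F →ₗ[ℝ] E) {t : Set F} (hL : MapsTo L t s) :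
    JConvexOn t (f ∘ L) := by
  intro k x w hx hw hw₁ hmem
  have hL_sum : L (∑ i, w i • x i) = ∑ i, w i • L (x i) := by simp only [map_sum, map_smul]
  simpa only [Function.comp_apply, hL_sum] using
    h k (L ∘ x) w (fun i => hL (hx i)) hw hw₁ (hL_sum ▸ hL hmem)

theorem apply_smul_add_smul_le_s16 (h : JConvexOn s f) {x y : E} (hx : x ∈ s) (hy : y ∈ s)
    {p q : ℝ} (hp : 0 ≤ p) (hq : 0 ≤ q) (hpq : p + q = 1) (hmem : p • x + q • y ∈ s) :
    f (p • x + q • y) ≤ p * f x + q * f y := by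
  have := h 2 ![x, y] ![p, q] (by simp [Fin.forall_fin_two, hx, hy])
    (by simp [Fin.forall_fin_two, hp, hq]) (by simpa using hpq) (by simpa using hmem)
  simpa using this

end JConvexOn

theorem theta_pos (z : ℂ) : 0 < theta z := by
  unfold theta
  split_ifs with h
  · exact h
  · linarith [neg_pi_lt_arg z, pi_pos]

theorem arg_ne_zero_of_theta_lt {z : ℂ} (h : theta z < 2 * π) : arg z ≠ 0 := by
  intro h0
  simp [theta, h0] at h

theorem neg_mem_slitPlane_of_theta_lt {z : ℂ} (h : theta z < 2 * π) : -z ∈ slitPlane := by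
  rw [mem_slitPlane_iff, neg_re, neg_im, neg_pos, Ne, neg_eq_zero]
  by_contra! hz
  exact arg_ne_zero_of_theta_lt h (arg_eq_zero_iff.mpr hz)

theorem theta_eq_pi_add_arg_neg {z : ℂ} (h : theta z < 2 * π) : theta z = π + arg (-z) := by
  have harg := arg_ne_zero_of_theta_lt h
  rcases lt_trichotomy z.im 0 with him | him | him
  · rw [arg_neg_eq_arg_add_pi_of_im_neg him, theta, if_neg (arg_neg_iff.mpr him).not_gt]
    ring
  · have hre : z.re < 0 := by
      by_contra! hre
      exact harg (arg_eq_zero_iff.mpr ⟨hre, him⟩)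
    rw [theta, arg_eq_pi_iff.mpr ⟨hre, him⟩, if_pos pi_pos,
      arg_eq_zero_iff.mpr ⟨by simp [hre.le], by simp [him]⟩, add_zero]
  · have hpos : 0 < arg z := (arg_nonneg_iff.mpr him.le).lt_of_ne' harg
    rw [arg_neg_eq_arg_sub_pi_of_im_pos him, theta, if_pos hpos]
    ring

theorem theta_conj {z : ℂ} (h : theta z < 2 * π) : theta (conj z) = 2 * π - theta z := by
  have harg := arg_ne_zero_of_theta_lt h
  rcases eq_or_ne (arg z) π with hπ | hπ
  · rw [theta, theta, arg_conj, if_pos hπ, hπ, if_pos pi_pos]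
    ring
  rw [theta, theta, arg_conj, if_neg hπ]
  rcases harg.lt_or_gt with hneg | hpos
  · rw [if_pos (neg_pos.mpr hneg), if_neg hneg.not_gt]
    ring
  · rw [if_neg (by linarith), if_pos hpos]
    ring

theorem convexOn_of_hasDerivAt_of_monotoneOn {D : Set ℝ} (hD : Convex ℝ D) {g g' : ℝ → ℝ}
    (hg : ∀ t ∈ D, HasDerivAt g (g' t) t) (hg' : MonotoneOn g' D) : ConvexOn ℝ D g := by
  refine MonotoneOn.convexOn_of_deriv hD (fun t ht => (hg t ht).continuousAt.continuousWithinAt)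
    (fun t ht => (hg t (interior_subset ht)).differentiableAt.differentiableWithinAt) ?_
  intro t₁ h₁ t₂ h₂ h₁₂
  rw [(hg t₁ (interior_subset h₁)).deriv, (hg t₂ (interior_subset h₂)).deriv]
  exact hg' (interior_subset h₁) (interior_subset h₂) h₁₂

theorem convexOn_of_forall_convexOn_segment {E : Type*} [AddCommGroup E] [Module ℝ E]
    {s : Set E} {f : E → ℝ} (hs : Convex ℝ s)
    (h : ∀ x ∈ s, ∀ y ∈ s, ConvexOn ℝ (Icc 0 1) (fun t : ℝ => f (x + t • (y - x)))) :
    ConvexOn ℝ s f := by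
  refine ⟨hs, fun x hx y hy p q hp hq hpq => ?_⟩
  have := (h x hx y hy).2 (left_mem_Icc.mpr zero_le_one) (right_mem_Icc.mpr zero_le_one)
    hp hq hpq
  obtain rfl : p = 1 - q := by linarith
  simp only [smul_eq_mul, mul_zero, mul_one, zero_add, zero_smul, add_zero, one_smul,
    add_sub_cancel] at this ⊢
  convert this using 2
  module

theorem hasDerivAt_norm_sq_add_mul_arg_neg (a : ℝ) {x v : ℂ} {t : ℝ}
    (h : -(x + t • v) ∈ slitPlane) :
    HasDerivAt (fun t : ℝ => ‖x + t • v‖ ^ 2 + a * arg (-(x + t • v)))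
      (2 * inner ℝ (x + t • v) v + a * (v / (x + t • v)).im) t := by
  have hline : HasDerivAt (fun t : ℝ => x + t • v) v t := by
    simpa using ((hasDerivAt_id t).smul_const v).const_add x
  have hlog : HasDerivAt (fun t : ℝ => log (-(x + t • v))) (v / (x + t • v)) t := by
    simpa only [Pi.neg_apply, neg_div_neg_eq] using hline.neg.clog_real h
  have harg : HasDerivAt (fun t : ℝ => arg (-(x + t • v))) (v / (x + t • v)).im t := by
    simpa only [Function.comp_def, imCLM_apply, log_im] using
      imCLM.hasFDerivAt.comp_hasDerivAt t hlog
  exact hline.norm_sq.add (harg.const_mul a)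

theorem mul_im_sq_div_mul_le {a c : ℝ} (hc : 0 ≤ c) (ha : |a| ≤ 2 * c ^ 2) {u₁ u₂ : ℂ}
    (h₁ : c ≤ ‖u₁‖) (h₂ : c ≤ ‖u₂‖) (v : ℂ) : a * (v ^ 2 / (u₁ * u₂)).im ≤ 2 * ‖v‖ ^ 2 := by
  have hc₁₂ : c ^ 2 ≤ ‖u₁‖ * ‖u₂‖ := by rw [sq]; exact mul_le_mul h₁ h₂ hc (norm_nonneg _)
  have him : |(v ^ 2 / (u₁ * u₂)).im| * (‖u₁‖ * ‖u₂‖) ≤ ‖v‖ ^ 2 := by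
    rcases eq_or_ne (u₁ * u₂) 0 with h0 | h0
    · simp [h0, ← norm_mul]
    · calc |(v ^ 2 / (u₁ * u₂)).im| * (‖u₁‖ * ‖u₂‖)
          ≤ ‖v ^ 2 / (u₁ * u₂)‖ * ‖u₁ * u₂‖ := by
            rw [norm_mul]; gcongr; exact abs_im_le_norm _
        _ = ‖v‖ ^ 2 := by rw [← norm_mul, div_mul_cancel₀ _ h0, norm_pow]
  calc a * (v ^ 2 / (u₁ * u₂)).im ≤ |a| * |(v ^ 2 / (u₁ * u₂)).im| := by
        rw [← abs_mul]; exact le_abs_self _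
    _ ≤ 2 * c ^ 2 * |(v ^ 2 / (u₁ * u₂)).im| := by gcongr
    _ ≤ 2 * (‖u₁‖ * ‖u₂‖) * |(v ^ 2 / (u₁ * u₂)).im| := by gcongr
    _ ≤ 2 * ‖v‖ ^ 2 := by nlinarith [him]

theorem convexOn_norm_sq_add_mul_arg_neg {a c : ℝ} {s : Set ℂ} (hs : Convex ℝ s) (hc : 0 ≤ c)
    (ha : |a| ≤ 2 * c ^ 2) (hsc : ∀ w ∈ s, c ≤ ‖w‖ ∧ -w ∈ slitPlane) :
    ConvexOn ℝ s (fun w => ‖w‖ ^ 2 + a * arg (-w)) := by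
  refine convexOn_of_forall_convexOn_segment hs fun x hx y hy => ?_
  set v := y - x
  have hmem : ∀ t ∈ Icc (0 : ℝ) 1, x + t • v ∈ s := fun t ht => hs.add_smul_sub_mem hx hy ht
  refine convexOn_of_hasDerivAt_of_monotoneOn (convex_Icc 0 1)
    (fun t ht => hasDerivAt_norm_sq_add_mul_arg_neg a (hsc _ (hmem t ht)).2) ?_
  intro t₁ ht₁ t₂ ht₂ h₁₂
  obtain ⟨hc₁, hslit₁⟩ := hsc _ (hmem t₁ ht₁)
  obtain ⟨hc₂, hslit₂⟩ := hsc _ (hmem t₂ ht₂)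
  have hne₁ : x + t₁ • v ≠ 0 := fun h => slitPlane_ne_zero hslit₁ (by rw [h, neg_zero])
  have hne₂ : x + t₂ • v ≠ 0 := fun h => slitPlane_ne_zero hslit₂ (by rw [h, neg_zero])
  have hinner : inner ℝ (x + t₂ • v) v - inner ℝ (x + t₁ • v) v = (t₂ - t₁) * ‖v‖ ^ 2 := by
    rw [← inner_sub_left, add_sub_add_left_eq_sub, ← sub_smul, real_inner_smul_left,
      real_inner_self_eq_norm_sq]
  have hdiv : v / (x + t₂ • v) - v / (x + t₁ • v)
      = -((t₂ - t₁ : ℝ) * (v ^ 2 / ((x + t₁ • v) * (x + t₂ • v)))) := by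
    field_simp
    simp only [Complex.real_smul]
    push_cast
    ring
  have him : (v / (x + t₂ • v)).im - (v / (x + t₁ • v)).im
      = -((t₂ - t₁) * (v ^ 2 / ((x + t₁ • v) * (x + t₂ • v))).im) := by
    rw [← sub_im, hdiv, neg_im, im_ofReal_mul]
  have hkey := mul_im_sq_div_mul_le hc ha hc₁ hc₂ v
  dsimp only
  linear_combination
    (-2) * hinner - a * him + mul_nonneg (sub_nonneg.mpr h₁₂) (sub_nonneg.mpr hkey)

def slitAnnulus (ε : ℝ) : Set ℂ := {z | |‖z‖ - 1| < ε ∧ 0 < theta z ∧ theta z < 2 * π}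

theorem conj_mem_slitAnnulus {ε : ℝ} {z : ℂ} (hz : z ∈ slitAnnulus ε) :
    conj z ∈ slitAnnulus ε := by
  obtain ⟨hnorm, hpos, hlt⟩ := hz
  refine ⟨by rwa [norm_conj], ?_, ?_⟩ <;> rw [theta_conj hlt] <;> linarith [theta_pos z]

theorem exists_ball_le_norm_and_neg_mem_slitPlane {ε : ℝ} {z : ℂ} (hz : z ∈ slitAnnulus ε) :
    ∃ δ > 0, ∀ w ∈ Metric.ball z δ, 1 - ε ≤ ‖w‖ ∧ -w ∈ slitPlane := by
  have hopen : IsOpen {w : ℂ | 1 - ε < ‖w‖ ∧ -w ∈ slitPlane} :=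
    (isOpen_lt continuous_const continuous_norm).inter (isOpen_slitPlane.preimage continuous_neg)
  obtain ⟨δ, hδ, hball⟩ := Metric.isOpen_iff.mp hopen z
    ⟨by linarith [(abs_lt.mp hz.1).1], neg_mem_slitPlane_of_theta_lt hz.2.2⟩
  exact ⟨δ, hδ, fun w hw => ⟨(hball hw).1.le, (hball hw).2⟩⟩

theorem exists_jConvexOn_ball_inter_slitAnnulus {a ε : ℝ} (hε : ε < 1)
    (ha : |a| ≤ 2 * (1 - ε) ^ 2) {z : ℂ} (hz : z ∈ slitAnnulus ε) :
    ∃ δ > 0, JConvexOn (Metric.ball z δ ∩ slitAnnulus ε) (fun w => ‖w‖ ^ 2 + a * theta w) := by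
  obtain ⟨δ, hδ, hball⟩ := exists_ball_le_norm_and_neg_mem_slitPlane hz
  refine ⟨δ, hδ, ?_⟩
  have hconv := (convexOn_norm_sq_add_mul_arg_neg (convex_ball z δ) (by linarith) ha
    hball).add_const (a * π)
  refine (hconv.jConvexOn_of_subset inter_subset_left).congr fun w hw => ?_
  simp only [Pi.add_apply, theta_eq_pi_add_arg_neg hw.2.2.2]
  ring

theorem not_jConvexOn_slitAnnulus_of_pos {a ε : ℝ} (hε : 0 < ε) (ha : 0 < a) :
    ¬ JConvexOn (slitAnnulus ε) (fun z => ‖z‖ ^ 2 + a * theta z) := by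
  intro h
  obtain ⟨δ, hδ, hδa, hδε, hδ1⟩ : ∃ δ : ℝ, 0 < δ ∧ δ ≤ a / 2 ∧ δ ≤ ε ∧ δ ≤ 1 :=
    ⟨min (min (a / 2) ε) 1, by positivity, (min_le_left _ _).trans (min_le_left _ _),
      (min_le_left _ _).trans (min_le_right _ _), min_le_right _ _⟩
  set x := exp (δ * I)
  set s := (1 / 4 : ℝ) • x + (3 / 4 : ℝ) • conj x
  have hx_norm : ‖x‖ = 1 := norm_exp_ofReal_mul_I δ
  have hx_theta : theta x = δ := by
    have harg : arg x = δ := by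
      rw [arg_exp_mul_I, toIocMod_eq_self]
      constructor <;> linarith [pi_gt_three]
    rw [theta, harg, if_pos hδ]
  have hx_mem : x ∈ slitAnnulus ε := ⟨by simpa [hx_norm], by linarith, by linarith [pi_gt_three]⟩
  have hs_re : s.re = Real.cos δ := by simp [s, x, exp_ofReal_mul_I_re]; ring
  have hs_im : s.im = -(Real.sin δ / 2) := by simp [s, x, exp_ofReal_mul_I_im]; ring
  have hsin : 0 < Real.sin δ := sin_pos_of_pos_of_lt_pi hδ (by linarith [pi_gt_three])
  have hcos : 1 - δ ^ 2 / 2 ≤ Real.cos δ := one_sub_sq_div_two_le_cos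
  have hs_arg : -(π / 2) < arg s ∧ arg s < 0 := by
    refine ⟨(abs_lt.mp (abs_arg_lt_pi_div_two_iff.mpr (Or.inl ?_))).1, arg_neg_iff.mpr ?_⟩
    · rw [hs_re]; nlinarith
    · rw [hs_im]; linarith
  have hs_theta : theta s = 2 * π + arg s := by rw [theta, if_neg hs_arg.2.not_gt]; ring
  have hs_norm : Real.cos δ ≤ ‖s‖ ∧ ‖s‖ ≤ 1 := by
    refine ⟨hs_re ▸ re_le_norm s, ?_⟩
    calc ‖s‖ ≤ ‖(1 / 4 : ℝ) • x‖ + ‖(3 / 4 : ℝ) • conj x‖ := norm_add_le _ _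
      _ = 1 := by rw [norm_smul, norm_smul, norm_conj, hx_norm]; norm_num
  have hs_mem : s ∈ slitAnnulus ε := by
    refine ⟨abs_lt.mpr ⟨by nlinarith, by linarith⟩, ?_, ?_⟩ <;> rw [hs_theta] <;>
      linarith [pi_gt_three]
  have hjensen : ‖s‖ ^ 2 + a * theta s ≤ 1 / 4 * (1 + a * δ) + 3 / 4 * (1 + a * (2 * π - δ)) := by
    have := h.apply_smul_add_smul_le_s16 hx_mem (conj_mem_slitAnnulus hx_mem)
      (by norm_num) (by norm_num) (by norm_num) hs_mem
    rwa [norm_conj, theta_conj hx_mem.2.2, hx_norm, hx_theta, one_pow] at this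
  rw [hs_theta] at hjensen
  have hsin_le : Real.sin δ ≤ δ := sin_le hδ.le
  nlinarith [Real.sin_sq_add_cos_sq δ, hs_norm.1, mul_lt_mul_of_pos_left hs_arg.1 ha]

theorem not_jConvexOn_slitAnnulus {a ε : ℝ} (hε : 0 < ε) (ha : a ≠ 0) :
    ¬ JConvexOn (slitAnnulus ε) (fun z => ‖z‖ ^ 2 + a * theta z) := by
  rcases ha.lt_or_gt with hneg | hpos
  · intro h
    refine not_jConvexOn_slitAnnulus_of_pos hε (neg_pos.mpr hneg) ?_
    refine ((h.comp_linearMap conjAe.toLinearMap fun z hz => conj_mem_slitAnnulus hz).add_const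
      (-(2 * π * a))).congr fun z hz => ?_
    simp only [Function.comp_apply, AlgEquiv.toLinearMap_apply, conjAe_coe, norm_conj,
      theta_conj hz.2.2]
    ring
  · exact not_jConvexOn_slitAnnulus_of_pos hε hpos

/-- On the slit annulus `Ω = {r e^{iθ} : |r - 1| < ε, 0 < θ < 2π}` the function
`f = r² + aθ` (with `0 < |a| < 2(1-ε)²`, `ε` small) is locally convex but not convex. -/
theorem slit_annulus_locallyConvex_not_convex (a ε : ℝ) (hε : 0 < ε) (hε1 : ε < 1)
    (ha : a ≠ 0) (ha2 : |a| < 2 * (1 - ε) ^ 2) :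
    (∀ z ∈ {z : ℂ | |‖z‖ - 1| < ε ∧ 0 < theta z ∧ theta z < 2 * π},
        ∃ δ > (0 : ℝ), JConvexOn
          (Metric.ball z δ ∩
            {z : ℂ | |‖z‖ - 1| < ε ∧ 0 < theta z ∧ theta z < 2 * π})
          (fun z => ‖z‖ ^ 2 + a * theta z)) ∧
    ¬ JConvexOn {z : ℂ | |‖z‖ - 1| < ε ∧ 0 < theta z ∧ theta z < 2 * π}
        (fun z => ‖z‖ ^ 2 + a * theta z) :=
  ⟨fun _ hz => exists_jConvexOn_ball_inter_slitAnnulus hε1 ha2.le hz,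
    not_jConvexOn_slitAnnulus hε ha⟩
end

section
/- Let Ω ⊆ ℝ² be the union of three rays {re^{iθ} : r ≥ 0} for θ = 0, 2π/3, 4π/3. The function f(re^{iθ}) = (r-1)² is interval convex on Ω (convex on every segment contained in Ω) but not locally convex at 0: for every 0 < r < 2, Jensen's inequality fails for the convex combination 0 = (1/3)(r,0) + (1/3)re^{2πi/3} + (1/3)re^{4πi/3}. -/
/-!
The directions `1, ω₁, ω₂` of the rays sum to zero and any two of them are linearly independent,
so `a u + b v = s z` with `a, b, s ≥ 0`, `u ≠ v` two of the directions and `z` any of them forces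
`a = 0` or `b = 0`: no point of `Ω` lies strictly between two of its rays. Applied to the midpoint,
a segment inside `Ω` therefore lies on one ray, where the norm is affine and `f` is the convex
function `t ↦ (t - 1)²` of it. At the origin, Jensen's inequality would compare `(r - 1)²` with
`f 0 = 1`.
-/
open scoped Real
open Set

section RealModule

variable {E : Type*} [AddCommGroup E] [Module ℝ E]

theorem eq_zero_or_eq_zero_of_smul_add_smul_eq_smul {u v w : E} (huvw : u + v + w = 0)
    (huv : LinearIndependent ℝ ![u, v]) {a b s : ℝ} (ha : 0 ≤ a) (hs : 0 ≤ s)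
    (h : a • u + b • v = s • u ∨ a • u + b • v = s • v ∨ a • u + b • v = s • w) :
    a = 0 ∨ b = 0 := by
  rw [LinearIndependent.pair_iff] at huv
  rcases h with h | h | h
  · exact .inr (huv (a - s) b (by linear_combination (norm := module) h)).2
  · exact .inl (huv a (b - s) (by linear_combination (norm := module) h)).1
  · have := (huv (a + s) (b + s) (by linear_combination (norm := module) h + s • huvw)).1
    exact .inl (by linarith)

theorem sameRay_of_midpoint_eq_smul {u v w : E} (huvw : u + v + w = 0)
    (huv : LinearIndependent ℝ ![u, v]) {a b s : ℝ} (ha : 0 ≤ a) (hb : 0 ≤ b) (hs : 0 ≤ s)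
    (h : midpoint ℝ (a • u) (b • v) = s • u ∨ midpoint ℝ (a • u) (b • v) = s • v ∨
      midpoint ℝ (a • u) (b • v) = s • w) :
    SameRay ℝ (a • u) (b • v) := by
  have h2 : a • u + b • v = (2 * s) • u ∨ a • u + b • v = (2 * s) • v ∨
      a • u + b • v = (2 * s) • w := by
    simpa only [midpoint_eq_smul_add, invOf_eq_inv, inv_smul_eq_iff₀ (two_ne_zero (α := ℝ)),
      smul_smul] using h
  rcases eq_zero_or_eq_zero_of_smul_add_smul_eq_smul huvw huv ha (by positivity) h2
    with rfl | rfl <;> simp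

end RealModule

theorem ConvexOn.le_of_sameRay {E : Type*} [SeminormedAddCommGroup E] [NormedSpace ℝ E]
    {g : ℝ → ℝ} (hg : ConvexOn ℝ (Ici 0) g) {x y : E} (hxy : SameRay ℝ x y) {l : ℝ}
    (hl₀ : 0 ≤ l) (hl₁ : l ≤ 1) :
    g ‖l • x + (1 - l) • y‖ ≤ l * g ‖x‖ + (1 - l) * g ‖y‖ := by
  have hl₁' : 0 ≤ 1 - l := sub_nonneg.2 hl₁
  rw [((hxy.nonneg_smul_left hl₀).nonneg_smul_right hl₁').norm_add,
    norm_smul_of_nonneg hl₀, norm_smul_of_nonneg hl₁']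
  exact hg.2 (norm_nonneg x) (norm_nonneg y) hl₀ hl₁' (by ring)

theorem convexOn_sub_one_sq : ConvexOn ℝ univ fun t : ℝ ↦ (t - 1) ^ 2 := by
  simpa [Function.comp_def, sub_eq_add_neg] using
    (even_two.convexOn_pow (𝕜 := ℝ)).translate_left (-1)

local notation "ω₁" => Complex.exp ((2 * π / 3 : ℝ) * Complex.I)
local notation "ω₂" => Complex.exp ((4 * π / 3 : ℝ) * Complex.I)

theorem Complex.linearIndependent_pair_of_det_ne_zero {z w : ℂ}
    (h : z.re * w.im - z.im * w.re ≠ 0) : LinearIndependent ℝ ![z, w] := by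
  refine LinearIndependent.pair_iff.2 fun s t hst ↦ ?_
  have hre : s * z.re + t * w.re = 0 := by simpa using congrArg Complex.re hst
  have him : s * z.im + t * w.im = 0 := by simpa using congrArg Complex.im hst
  have hs : s * (z.re * w.im - z.im * w.re) = 0 := by linear_combination w.im * hre - w.re * him
  have ht : t * (z.re * w.im - z.im * w.re) = 0 := by linear_combination z.re * him - z.im * hre
  exact ⟨(mul_eq_zero.1 hs).resolve_right h, (mul_eq_zero.1 ht).resolve_right h⟩

theorem Complex.exp_two_pi_div_three_mul_I : ω₁ = ⟨-(1 / 2), √3 / 2⟩ := by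
  have hθ : 2 * π / 3 = π - π / 3 := by ring
  apply Complex.ext
  · rw [exp_ofReal_mul_I_re, hθ, Real.cos_pi_sub, Real.cos_pi_div_three]
  · rw [exp_ofReal_mul_I_im, hθ, Real.sin_pi_sub, Real.sin_pi_div_three]

theorem Complex.exp_four_pi_div_three_mul_I : ω₂ = ⟨-(1 / 2), -(√3 / 2)⟩ := by
  have hθ : 4 * π / 3 = π / 3 + π := by ring
  apply Complex.ext
  · rw [exp_ofReal_mul_I_re, hθ, Real.cos_add_pi, Real.cos_pi_div_three]
  · rw [exp_ofReal_mul_I_im, hθ, Real.sin_add_pi, Real.sin_pi_div_three]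

theorem Complex.one_add_exp_two_pi_div_three_add_exp_four_pi_div_three : 1 + ω₁ + ω₂ = 0 := by
  rw [Complex.exp_two_pi_div_three_mul_I, Complex.exp_four_pi_div_three_mul_I]
  apply Complex.ext <;> norm_num

def threeRays : Set ℂ :=
  {z : ℂ | ∃ r : ℝ, 0 ≤ r ∧ (z = (r : ℂ) ∨ z = (r : ℂ) * ω₁ ∨ z = (r : ℂ) * ω₂)}

theorem mem_threeRays_iff {z : ℂ} :
    z ∈ threeRays ↔ ∃ r : ℝ, 0 ≤ r ∧ (z = r • (1 : ℂ) ∨ z = r • ω₁ ∨ z = r • ω₂) := by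
  simp only [threeRays, mem_ofPred_eq, Complex.real_smul, mul_one]

theorem sameRay_of_midpoint_mem_threeRays {x y : ℂ} (hx : x ∈ threeRays) (hy : y ∈ threeRays)
    (hm : midpoint ℝ x y ∈ threeRays) : SameRay ℝ x y := by
  rw [mem_threeRays_iff] at hx hy hm
  obtain ⟨a, ha, hx⟩ := hx
  obtain ⟨b, hb, hy⟩ := hy
  obtain ⟨s, hs, hm⟩ := hm
  have h₁ := Complex.exp_two_pi_div_three_mul_I
  have h₂ := Complex.exp_four_pi_div_three_mul_I
  have hsum₀₁ := Complex.one_add_exp_two_pi_div_three_add_exp_four_pi_div_three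
  have hsum₀₂ : 1 + ω₂ + ω₁ = 0 := by linear_combination hsum₀₁
  have hsum₁₂ : ω₁ + ω₂ + 1 = 0 := by linear_combination hsum₀₁
  have hind₀₁ : LinearIndependent ℝ ![1, ω₁] :=
    Complex.linearIndependent_pair_of_det_ne_zero (by rw [h₁]; simp)
  have hind₀₂ : LinearIndependent ℝ ![1, ω₂] :=
    Complex.linearIndependent_pair_of_det_ne_zero (by rw [h₂]; simp)
  have hind₁₂ : LinearIndependent ℝ ![ω₁, ω₂] :=
    Complex.linearIndependent_pair_of_det_ne_zero (by rw [h₁, h₂]; ring_nf; positivity)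
  rcases hx with rfl | rfl | rfl <;> rcases hy with rfl | rfl | rfl
  · exact (SameRay.sameRay_nonneg_smul_left _ ha).nonneg_smul_right hb
  · exact sameRay_of_midpoint_eq_smul hsum₀₁ hind₀₁ ha hb hs hm
  · exact sameRay_of_midpoint_eq_smul hsum₀₂ hind₀₂ ha hb hs (hm.imp_right Or.symm)
  · exact (sameRay_of_midpoint_eq_smul hsum₀₁ hind₀₁ hb ha hs (by rwa [midpoint_comm])).symm
  · exact (SameRay.sameRay_nonneg_smul_left _ ha).nonneg_smul_right hb
  · exact sameRay_of_midpoint_eq_smul hsum₁₂ hind₁₂ ha hb hs hm.rotate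
  · refine (sameRay_of_midpoint_eq_smul hsum₀₂ hind₀₂ hb ha hs ?_).symm
    rw [midpoint_comm]
    exact hm.imp_right Or.symm
  · refine (sameRay_of_midpoint_eq_smul hsum₁₂ hind₁₂ hb ha hs ?_).symm
    rw [midpoint_comm]
    exact hm.rotate
  · exact (SameRay.sameRay_nonneg_smul_left _ ha).nonneg_smul_right hb

/-- On the union `Ω` of the three rays at angles `0, 2π/3, 4π/3`, the function
`f(r e^{iθ}) = (r - 1)²` is interval convex (convex on every segment contained in `Ω`)
but not locally convex at `0`: for every `0 < r < 2`, Jensen's inequality fails for the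
convex combination `0 = (1/3) r + (1/3) r e^{2πi/3} + (1/3) r e^{4πi/3}`. -/
theorem three_rays_intervalConvex_not_locallyConvex :
    (∀ x ∈ {z : ℂ | ∃ r : ℝ, 0 ≤ r ∧ (z = (r : ℂ) ∨
        z = (r : ℂ) * Complex.exp ((2 * π / 3 : ℝ) * Complex.I) ∨
        z = (r : ℂ) * Complex.exp ((4 * π / 3 : ℝ) * Complex.I))},
      ∀ y ∈ {z : ℂ | ∃ r : ℝ, 0 ≤ r ∧ (z = (r : ℂ) ∨
        z = (r : ℂ) * Complex.exp ((2 * π / 3 : ℝ) * Complex.I) ∨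
        z = (r : ℂ) * Complex.exp ((4 * π / 3 : ℝ) * Complex.I))},
      segment ℝ x y ⊆ {z : ℂ | ∃ r : ℝ, 0 ≤ r ∧ (z = (r : ℂ) ∨
        z = (r : ℂ) * Complex.exp ((2 * π / 3 : ℝ) * Complex.I) ∨
        z = (r : ℂ) * Complex.exp ((4 * π / 3 : ℝ) * Complex.I))} →
      ∀ l : ℝ, 0 ≤ l → l ≤ 1 →
        (‖l • x + (1 - l) • y‖ - 1) ^ 2 ≤
          l * (‖x‖ - 1) ^ 2 + (1 - l) * (‖y‖ - 1) ^ 2) ∧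
    (∀ r : ℝ, 0 < r → r < 2 →
      (1 / 3) * (‖(r : ℂ)‖ - 1) ^ 2 +
        (1 / 3) * (‖(r : ℂ) * Complex.exp ((2 * π / 3 : ℝ) * Complex.I)‖ - 1) ^ 2 +
        (1 / 3) * (‖(r : ℂ) * Complex.exp ((4 * π / 3 : ℝ) * Complex.I)‖ - 1) ^ 2 <
        (‖(0 : ℂ)‖ - 1) ^ 2) := by
  refine ⟨fun x hx y hy hseg l hl₀ hl₁ ↦ ?_, fun r hr₀ hr₂ ↦ ?_⟩
  · have hxy := sameRay_of_midpoint_mem_threeRays hx hy (hseg (midpoint_mem_segment x y))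
    exact (convexOn_sub_one_sq.subset (subset_univ _) (convex_Ici 0)).le_of_sameRay hxy hl₀ hl₁
  · simp only [norm_mul, Complex.norm_real, Real.norm_eq_abs, Complex.norm_exp_ofReal_mul_I,
      mul_one, abs_of_pos hr₀, norm_zero]
    nlinarith
end
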